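/- arXiv:1705.08971 — 13 statements merged into one kernel-verified Lean document; each statement's English description precedes it below -/
import Mathlib

section
/- Let m and n be positive integers, let L : Fin m → Fin n → ℝ be row-stochastic with zero rows allowed, and let T : Fin m → Fin n → ℝ be column-stochastic with zero columns allowed. Then TI(L,T) = 1 if and only if both of the following hold: (i) for all i, j, if T i j > 0 then L i j = 1; and (ii) no column of L is identically zero and no column of T is identically zero. -/
open Finset

/-!
Every entry of `L` is at most `1`, so the `j`-th column sum `∑ i, L i j * T i j` is at most
`∑ i, T i j ≤ 1`, and `TI` is an average of these column sums. Hence `TI = 1` exactly when every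
column sum equals `1`, which forces column `j` of `T` to be a probability vector carried by the
entries where `L i j = 1`.
-/

lemma le_one_of_sum_eq_one_or_eq_zero {κ : Type*} [Fintype κ] {f : κ → ℝ}
    (hf : ∀ j, 0 ≤ f j) (hsum : ∑ j, f j = 1 ∨ ∀ j, f j = 0) (j : κ) : f j ≤ 1 := by
  rcases hsum with hsum | hzero
  · exact hsum ▸ single_le_sum (fun k _ => hf k) (mem_univ j)
  · exact (hzero j).trans_le zero_le_one

lemma one_div_card_mul_sum_eq_one_iff {κ : Type*} [Fintype κ] [Nonempty κ] {a : κ → ℝ}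
    (ha : ∀ j, a j ≤ 1) : 1 / (Fintype.card κ : ℝ) * ∑ j, a j = 1 ↔ ∀ j, a j = 1 := by
  have hcard : (Fintype.card κ : ℝ) ≠ 0 := Nat.cast_ne_zero.mpr Fintype.card_ne_zero
  have hcard_eq : (Fintype.card κ : ℝ) = ∑ _j : κ, (1 : ℝ) := by simp
  rw [one_div_mul_eq_div, div_eq_one_iff_eq hcard, hcard_eq,
    sum_eq_sum_iff_of_le fun j _ => ha j]
  simp

section Column

variable {ι : Type*} [Fintype ι] {l t : ι → ℝ}

lemma sum_mul_le_sum_of_le_one (hl : ∀ i, l i ≤ 1) (ht : ∀ i, 0 ≤ t i) :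
    ∑ i, l i * t i ≤ ∑ i, t i :=
  sum_le_sum fun i _ => mul_le_of_le_one_left (ht i) (hl i)

lemma sum_mul_le_one (hl : ∀ i, l i ≤ 1) (ht : ∀ i, 0 ≤ t i)
    (hsum : ∑ i, t i = 1 ∨ ∀ i, t i = 0) : ∑ i, l i * t i ≤ 1 := by
  refine (sum_mul_le_sum_of_le_one hl ht).trans ?_
  rcases hsum with hsum | hzero
  · exact hsum.le
  · simp [hzero]

lemma sum_mul_eq_one_iff (hl : ∀ i, l i ≤ 1) (ht : ∀ i, 0 ≤ t i)
    (hsum : ∑ i, t i = 1 ∨ ∀ i, t i = 0) :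
    ∑ i, l i * t i = 1 ↔ (∀ i, 0 < t i → l i = 1) ∧ ∃ i, t i ≠ 0 := by
  have key (hne : ∃ i, t i ≠ 0) : ∑ i, l i * t i = 1 ↔ ∀ i, 0 < t i → l i = 1 := by
    obtain ⟨k, hk⟩ := hne
    have ht1 : ∑ i, t i = 1 := hsum.resolve_right fun h => hk (h k)
    rw [show (∑ i, l i * t i = 1) ↔ ∑ i, l i * t i = ∑ i, t i by rw [ht1],
      sum_eq_sum_iff_of_le fun i _ => mul_le_of_le_one_left (ht i) (hl i)]
    simp only [mem_univ, forall_const]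
    refine forall_congr' fun i => ⟨fun h hpos => ?_, fun h => ?_⟩
    · exact mul_right_cancel₀ hpos.ne' (h.trans (one_mul _).symm)
    · rcases (ht i).eq_or_lt with h0 | hpos
      · simp [← h0]
      · simp [h hpos]
  by_cases hne : ∃ i, t i ≠ 0
  · simp only [key hne, hne, and_true]
  · push Not at hne
    simp [hne]

end Column

theorem transmission_index_eq_one_iff_general (m n : ℕ) (hn : 0 < n)
    (L T : Fin m → Fin n → ℝ)
    (hLnn : ∀ i j, 0 ≤ L i j)
    (hLrow : ∀ i, (∑ j, L i j) = 1 ∨ ∀ j, L i j = 0)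
    (hTnn : ∀ i j, 0 ≤ T i j)
    (hTcol : ∀ j, (∑ i, T i j) = 1 ∨ ∀ i, T i j = 0) :
    (1 / (n : ℝ)) * ∑ j, ∑ i, L i j * T i j = 1 ↔
      ((∀ i j, 0 < T i j → L i j = 1) ∧
        (∀ j, ∃ i, L i j ≠ 0) ∧ (∀ j, ∃ i, T i j ≠ 0)) := by
  have : Nonempty (Fin n) := Fin.pos_iff_nonempty.mp hn
  have hL1 i j : L i j ≤ 1 := le_one_of_sum_eq_one_or_eq_zero (hLnn i) (hLrow i) j
  have hcol j := sum_mul_eq_one_iff (fun i => hL1 i j) (fun i => hTnn i j) (hTcol j)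
  have havg := one_div_card_mul_sum_eq_one_iff fun j =>
    sum_mul_le_one (fun i => hL1 i j) (fun i => hTnn i j) (hTcol j)
  rw [Fintype.card_fin] at havg
  simp only [havg, hcol]
  constructor
  · intro h
    refine ⟨fun i j => (h j).1 i, fun j => ?_, fun j => (h j).2⟩
    obtain ⟨i, hi⟩ := (h j).2
    exact ⟨i, by simp [(h j).1 i ((hTnn i j).lt_of_ne' hi)]⟩
  · rintro ⟨hLT, -, hT⟩ j
    exact ⟨fun i => hLT i j, hT j⟩

/-- `TI(L,T) = 1` iff (i) `T i j > 0 → L i j = 1` for all `i, j`, and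
(ii) no column of `L` and no column of `T` is identically zero. -/
theorem transmission_index_eq_one_iff (m n : ℕ) (hm : 0 < m) (hn : 0 < n)
    (L T : Fin m → Fin n → ℝ)
    (hLnn : ∀ i j, 0 ≤ L i j)
    (hLrow : ∀ i, (∑ j, L i j) = 1 ∨ ∀ j, L i j = 0)
    (hTnn : ∀ i j, 0 ≤ T i j)
    (hTcol : ∀ j, (∑ i, T i j) = 1 ∨ ∀ i, T i j = 0) :
    (1 / (n : ℝ)) * ∑ j, ∑ i, L i j * T i j = 1 ↔
      ((∀ i j, 0 < T i j → L i j = 1) ∧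
        (∀ j, ∃ i, L i j ≠ 0) ∧ (∀ j, ∃ i, T i j ≠ 0)) :=
  transmission_index_eq_one_iff_general m n hn L T hLnn hLrow hTnn hTcol
end

section
/- Let m and n be positive integers, let L : Fin m → Fin n → ℝ be row-stochastic with zero rows allowed, and let T : Fin m → Fin n → ℝ be column-stochastic with zero columns allowed. If TI(L,T) = 1, then m ≥ n (the number of data sets is at least the number of concepts). -/
open Finset

/-! Since each column of `T` is a probability vector or zero, every entry of `T` is at most `1`,
so `∑ⱼ ∑ᵢ L i j * T i j ≤ ∑ᵢ ∑ⱼ L i j ≤ m`, each row of `L` having mass at most `1`.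
The hypothesis says this double sum equals `n`. -/

variable {ι κ : Type*} [Fintype ι] [Fintype κ]

lemma le_one_of_sum_eq_one_or_eq_zero_s2 {f : ι → ℝ} (hf : ∀ i, 0 ≤ f i)
    (h : ∑ i, f i = 1 ∨ ∀ i, f i = 0) (i : ι) : f i ≤ 1 := by
  rcases h with h | h
  · exact h ▸ single_le_sum (fun k _ => hf k) (mem_univ i)
  · simp [h]

lemma sum_le_one_of_sum_eq_one_or_eq_zero {f : ι → ℝ} (h : ∑ i, f i = 1 ∨ ∀ i, f i = 0) :
    ∑ i, f i ≤ 1 := by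
  rcases h with h | h
  · exact h.le
  · simp [h]

theorem sum_sum_mul_le_card (L T : ι → κ → ℝ) (hLnn : ∀ i j, 0 ≤ L i j)
    (hLrow : ∀ i, (∑ j, L i j) = 1 ∨ ∀ j, L i j = 0) (hTnn : ∀ i j, 0 ≤ T i j)
    (hTcol : ∀ j, (∑ i, T i j) = 1 ∨ ∀ i, T i j = 0) :
    ∑ j, ∑ i, L i j * T i j ≤ Fintype.card ι := by
  have hT : ∀ i j, T i j ≤ 1 := fun i j =>
    le_one_of_sum_eq_one_or_eq_zero_s2 (fun k => hTnn k j) (hTcol j) i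
  calc ∑ j, ∑ i, L i j * T i j = ∑ i, ∑ j, L i j * T i j := sum_comm
    _ ≤ ∑ i, ∑ j, L i j := by
      gcongr with i _ j _
      exact mul_le_of_le_one_right (hLnn i j) (hT i j)
    _ ≤ ∑ _i : ι, (1 : ℝ) := sum_le_sum fun i _ => sum_le_one_of_sum_eq_one_or_eq_zero (hLrow i)
    _ = Fintype.card ι := by simp

theorem transmission_index_eq_one_dim_general (m n : ℕ)
    (L T : Fin m → Fin n → ℝ)
    (hLnn : ∀ i j, 0 ≤ L i j)
    (hLrow : ∀ i, (∑ j, L i j) = 1 ∨ ∀ j, L i j = 0)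
    (hTnn : ∀ i j, 0 ≤ T i j)
    (hTcol : ∀ j, (∑ i, T i j) = 1 ∨ ∀ i, T i j = 0)
    (hTI : (1 / (n : ℝ)) * ∑ j, ∑ i, L i j * T i j = 1) :
    n ≤ m := by
  have hn : (n : ℝ) ≠ 0 := by
    rintro h
    simp [h] at hTI
  have hsum : (n : ℝ) = ∑ j, ∑ i, L i j * T i j := by
    field_simp at hTI
    linarith
  have hle := sum_sum_mul_le_card L T hLnn hLrow hTnn hTcol
  rw [Fintype.card_fin, ← hsum] at hle
  exact_mod_cast hle

/-- If `TI(L,T) = 1` then the number of data sets is at least the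
number of concepts, i.e. `m ≥ n`. -/
theorem transmission_index_eq_one_dim (m n : ℕ) (hm : 0 < m) (hn : 0 < n)
    (L T : Fin m → Fin n → ℝ)
    (hLnn : ∀ i j, 0 ≤ L i j)
    (hLrow : ∀ i, (∑ j, L i j) = 1 ∨ ∀ j, L i j = 0)
    (hTnn : ∀ i j, 0 ≤ T i j)
    (hTcol : ∀ j, (∑ i, T i j) = 1 ∨ ∀ i, T i j = 0)
    (hTI : (1 / (n : ℝ)) * ∑ j, ∑ i, L i j * T i j = 1) :
    n ≤ m :=
  transmission_index_eq_one_dim_general m n L T hLnn hLrow hTnn hTcol hTI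
end

section
/- Let n be a positive integer, let L : Fin n → Fin n → ℝ be row-stochastic with zero rows allowed, and let T : Fin n → Fin n → ℝ be column-stochastic with zero columns allowed. Then TI(L,T) = 1 if and only if there exists a permutation σ of Fin n such that L i j = (if σ i = j then 1 else 0) for all i, j, and T = L; that is, TI equals 1 exactly when L and T are the same permutation matrix. -/
open Finset

/-! Rows of `L` and columns of `T` sum to at most `1`, so `L ≤ 1` entrywise and
`∑ L i j * T i j ≤ ∑ T i j ≤ n`. Hence `TI = 1` forces every column of `T` to sum to `1` and
`L i j * T i j = T i j`; symmetrically every row of `L` sums to `1` and `L i j * T i j = L i j`.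
So `T = L`, its entries satisfy `L i j ^ 2 = L i j`, and a doubly stochastic `0`–`1` matrix is
a permutation matrix. -/

theorem exists_eq_ite_of_sum_eq_one {κ R : Type*} [Fintype κ] [DecidableEq κ]
    [AddCommMonoidWithOne R] [CharZero R] {f : κ → R} (h01 : ∀ j, f j = 0 ∨ f j = 1)
    (hsum : ∑ j, f j = 1) : ∃ a, ∀ j, f j = if a = j then 1 else 0 := by
  classical
  have hf : ∀ j, f j = if f j = 1 then 1 else 0 := fun j => by
    rcases h01 j with h | h <;> simp [h]
  rw [sum_congr rfl fun j _ => hf j, sum_boole, Nat.cast_eq_one, card_eq_one] at hsum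
  obtain ⟨a, ha⟩ := hsum
  refine ⟨a, fun j => ?_⟩
  have hj : f j = 1 ↔ a = j := by simpa [eq_comm] using Finset.ext_iff.1 ha j
  rw [hf j]
  simp only [hj]

theorem exists_perm_eq_ite_of_sum_eq_one {ι R : Type*} [Fintype ι] [DecidableEq ι]
    [AddCommMonoidWithOne R] [CharZero R] {M : ι → ι → R}
    (h01 : ∀ i j, M i j = 0 ∨ M i j = 1) (hrow : ∀ i, ∑ j, M i j = 1)
    (hcol : ∀ j, ∑ i, M i j = 1) :
    ∃ σ : Equiv.Perm ι, ∀ i j, M i j = if σ i = j then 1 else 0 := by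
  choose σ hσ using fun i => exists_eq_ite_of_sum_eq_one (h01 i) (hrow i)
  choose τ hτ using fun j => exists_eq_ite_of_sum_eq_one (fun i => h01 i j) (hcol j)
  have hστ : ∀ i j, σ i = j ↔ τ j = i := fun i j => by
    have := (hσ i j).symm.trans (hτ j i)
    by_cases h : σ i = j <;> by_cases h' : τ j = i <;> simp_all
  exact ⟨⟨σ, τ, fun i => (hστ i _).1 rfl, fun j => (hστ _ j).2 rfl⟩, hσ⟩

theorem le_one_of_sum_eq_one_or_forall_eq_zero {κ : Type*} [Fintype κ] {f : κ → ℝ}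
    (hf : ∀ j, 0 ≤ f j) (h : ∑ j, f j = 1 ∨ ∀ j, f j = 0) (j : κ) : f j ≤ 1 := by
  rcases h with h | h
  · exact h ▸ single_le_sum (fun k _ => hf k) (mem_univ j)
  · simp [h j]

theorem sum_eq_one_and_mul_eq_of_sum_sum_mul_eq_card {ι κ : Type*} [Fintype ι] [Fintype κ]
    {L T : ι → κ → ℝ} (hL : ∀ i j, L i j ≤ 1) (hT : ∀ i j, 0 ≤ T i j)
    (hTcol : ∀ j, ∑ i, T i j = 1 ∨ ∀ i, T i j = 0)
    (hsum : ∑ j, ∑ i, L i j * T i j = Fintype.card κ) :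
    (∀ j, ∑ i, T i j = 1) ∧ ∀ i j, L i j * T i j = T i j := by
  have hLT : ∀ i j, L i j * T i j ≤ T i j := fun i j => mul_le_of_le_one_left (hT i j) (hL i j)
  have hcol : ∀ j, ∑ i, T i j ≤ 1 := fun j => (hTcol j).elim le_of_eq fun h => by simp [h]
  have h₁ : ∑ j, ∑ i, L i j * T i j ≤ ∑ j, ∑ i, T i j :=
    sum_le_sum fun j _ => sum_le_sum fun i _ => hLT i j
  have h₂ : ∑ j, ∑ i, T i j ≤ ∑ _j : κ, (1 : ℝ) := sum_le_sum fun j _ => hcol j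
  rw [sum_const, card_univ, nsmul_one] at h₂
  have hcols := (sum_eq_sum_iff_of_le fun j _ => sum_le_sum fun i _ => hLT i j).1 (by linarith)
  refine ⟨fun j => ?_, fun i j => ?_⟩
  · exact (sum_eq_sum_iff_of_le fun j _ => hcol j).1 (by rw [sum_const, card_univ, nsmul_one]; linarith) j (mem_univ j)
  · exact (sum_eq_sum_iff_of_le fun i _ => hLT i j).1 (hcols j (mem_univ j)) i (mem_univ i)

/-- In the square case, `TI(L,T) = 1` iff `L` and `T` are the same
permutation matrix. -/
theorem transmission_index_eq_one_iff_perm (n : ℕ) (hn : 0 < n)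
    (L T : Fin n → Fin n → ℝ)
    (hLnn : ∀ i j, 0 ≤ L i j)
    (hLrow : ∀ i, (∑ j, L i j) = 1 ∨ ∀ j, L i j = 0)
    (hTnn : ∀ i j, 0 ≤ T i j)
    (hTcol : ∀ j, (∑ i, T i j) = 1 ∨ ∀ i, T i j = 0) :
    (1 / (n : ℝ)) * ∑ j, ∑ i, L i j * T i j = 1 ↔
      ∃ σ : Equiv.Perm (Fin n),
        (∀ i j, L i j = if σ i = j then 1 else 0) ∧ T = L := by
  have hn' : (n : ℝ) ≠ 0 := by positivity
  constructor
  · intro hTI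
    have hsum : ∑ j, ∑ i, L i j * T i j = n := by field_simp at hTI; exact hTI
    obtain ⟨hTcol₁, hLT⟩ := sum_eq_one_and_mul_eq_of_sum_sum_mul_eq_card
      (fun i j => le_one_of_sum_eq_one_or_forall_eq_zero (hLnn i) (hLrow i) j) hTnn hTcol
      (by simpa using hsum)
    -- the same argument for the pair `(Tᵀ, Lᵀ)`, which has the same transmission index
    obtain ⟨hLrow₁, hTL⟩ := sum_eq_one_and_mul_eq_of_sum_sum_mul_eq_card
      (L := fun j i => T i j) (T := fun j i => L i j)
      (fun j i => le_one_of_sum_eq_one_or_forall_eq_zero (hTnn · j) (hTcol j) i)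
      (fun j i => hLnn i j) hLrow (by rw [sum_comm]; simpa [mul_comm] using hsum)
    have hTeq : T = L := funext₂ fun i j => (hLT i j).symm.trans ((mul_comm _ _).trans (hTL j i))
    rw [hTeq] at hLT hTcol₁
    obtain ⟨σ, hσ⟩ := exists_perm_eq_ite_of_sum_eq_one
      (fun i j => IsIdempotentElem.iff_eq_zero_or_one.1 (hLT i j)) hLrow₁ hTcol₁
    exact ⟨σ, hσ, hTeq⟩
  · rintro ⟨σ, hσ, hTL⟩
    have hcol : ∀ j, ∑ i, L i j * L i j = 1 := fun j => by simp [hσ, ← Equiv.eq_symm_apply]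
    rw [hTL]
    simp [hcol, hn']
end

section
/- Let N be a positive integer and C : Fin N → Fin N → ℝ a matrix with every entry equal to 0 or 1 (C i j = 1 means concept j is consistent with data set i). Let L be the row normalization of C and T the column normalization of C. Then every concept has a teaching set (i.e., for every column j there exists a row i with C i j = 1 and C i k = 0 for all k ≠ j) if and only if TI(L,T) = 1. (Equivalently, the Average Teaching Dimension of the concept space is finite if and only if TI(L,T) = 1.) -/
/-!
As `L ≤ 1`, column `j` contributes `∑ i, L i j * T i j ≤ ∑ i, T i j ≤ 1` to `N · TI`.
So `TI = 1` iff every column contributes exactly `1`, i.e. column `j` is nonzero and every row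
meeting it has `L i j = 1`, which says that this row is a teaching set for `j`. If every concept
has a teaching row, these rows are pairwise distinct, so by pigeonhole every row is a teaching
row, and the condition holds.
-/

open Finset

section Normalization

variable {ι κ : Type*} {C : ι → κ → ℝ}

section Row

variable [Fintype κ]

noncomputable def rowNormalize (C : ι → κ → ℝ) (i : ι) (j : κ) : ℝ :=
  if 0 < ∑ k, C i k then C i j / ∑ k, C i k else 0

theorem rowNormalize_of_nonneg (hC : ∀ i j, 0 ≤ C i j) (i : ι) (j : κ) :
    rowNormalize C i j = C i j / ∑ k, C i k := by
  unfold rowNormalize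
  split_ifs with h
  · rfl
  · have hzero : ∑ k, C i k = 0 :=
      le_antisymm (not_lt.mp h) (sum_nonneg fun k _ => hC i k)
    rw [hzero, div_zero]

theorem rowNormalize_le_one (hC : ∀ i j, 0 ≤ C i j) (i : ι) (j : κ) :
    rowNormalize C i j ≤ 1 := by
  rw [rowNormalize_of_nonneg hC]
  exact div_le_one_of_le₀ (single_le_sum (fun k _ => hC i k) (mem_univ j))
    (sum_nonneg fun k _ => hC i k)

theorem rowNormalize_eq_one_iff (hC : ∀ i j, 0 ≤ C i j) (i : ι) (j : κ) :
    rowNormalize C i j = 1 ↔ 0 < C i j ∧ ∀ k, k ≠ j → C i k = 0 := by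
  classical
  rw [rowNormalize_of_nonneg hC]
  constructor
  · intro h
    have hr : ∑ k, C i k ≠ 0 := fun h0 => by simp [h0] at h
    have hCr : C i j = ∑ k, C i k := (div_eq_one_iff_eq hr).mp h
    have hrest : ∑ k ∈ univ.erase j, C i k = 0 := by
      linarith [add_sum_erase univ (C i) (mem_univ j)]
    refine ⟨lt_of_le_of_ne (hC i j) (hCr ▸ hr.symm), fun k hk => ?_⟩
    exact (sum_eq_zero_iff_of_nonneg fun k _ => hC i k).mp hrest k
      (mem_erase.mpr ⟨hk, mem_univ k⟩)
  · rintro ⟨hpos, hrest⟩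
    rw [sum_eq_single_of_mem j (mem_univ j) fun k _ hk => hrest k hk, div_self hpos.ne']

end Row

section Col

variable [Fintype ι]

noncomputable def colNormalize (C : ι → κ → ℝ) (i : ι) (j : κ) : ℝ :=
  if 0 < ∑ k, C k j then C i j / ∑ k, C k j else 0

theorem colNormalize_of_nonneg (hC : ∀ i j, 0 ≤ C i j) (i : ι) (j : κ) :
    colNormalize C i j = C i j / ∑ k, C k j := by
  unfold colNormalize
  split_ifs with h
  · rfl
  · have hzero : ∑ k, C k j = 0 :=
      le_antisymm (not_lt.mp h) (sum_nonneg fun k _ => hC k j)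
    rw [hzero, div_zero]

theorem colNormalize_nonneg (hC : ∀ i j, 0 ≤ C i j) (i : ι) (j : κ) :
    0 ≤ colNormalize C i j := by
  rw [colNormalize_of_nonneg hC]
  exact div_nonneg (hC i j) (sum_nonneg fun k _ => hC k j)

theorem colNormalize_pos_iff (hC : ∀ i j, 0 ≤ C i j) (i : ι) (j : κ) :
    0 < colNormalize C i j ↔ 0 < C i j := by
  rw [colNormalize_of_nonneg hC]
  refine ⟨fun h => lt_of_le_of_ne (hC i j) fun h0 => by simp [← h0] at h, fun h => ?_⟩
  exact div_pos h (h.trans_le (single_le_sum (fun k _ => hC k j) (mem_univ i)))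

theorem sum_colNormalize_of_pos {j : κ} (hc : 0 < ∑ k, C k j) :
    ∑ i, colNormalize C i j = 1 := by
  simp only [colNormalize, if_pos hc, ← sum_div, div_self hc.ne']

theorem sum_colNormalize_le_one (j : κ) : ∑ i, colNormalize C i j ≤ 1 := by
  by_cases hc : 0 < ∑ k, C k j
  · exact (sum_colNormalize_of_pos hc).le
  · simp [colNormalize, hc]

end Col

variable [Fintype ι] [Fintype κ]

theorem sum_rowNormalize_mul_colNormalize_le_one (hC : ∀ i j, 0 ≤ C i j) (j : κ) :
    ∑ i, rowNormalize C i j * colNormalize C i j ≤ 1 :=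
  (sum_le_sum fun i _ =>
    mul_le_of_le_one_left (colNormalize_nonneg hC i j) (rowNormalize_le_one hC i j)).trans
    (sum_colNormalize_le_one j)

theorem sum_rowNormalize_mul_colNormalize_eq_one_iff (hC : ∀ i j, 0 ≤ C i j) (j : κ) :
    ∑ i, rowNormalize C i j * colNormalize C i j = 1 ↔
      (∃ i, 0 < C i j) ∧ ∀ i, 0 < C i j → ∀ k, k ≠ j → C i k = 0 := by
  have hle : ∀ i ∈ univ, rowNormalize C i j * colNormalize C i j ≤ colNormalize C i j :=
    fun i _ => mul_le_of_le_one_left (colNormalize_nonneg hC i j) (rowNormalize_le_one hC i j)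
  constructor
  · intro h
    have hsumT : ∑ i, colNormalize C i j = 1 :=
      le_antisymm (sum_colNormalize_le_one j) (h ▸ sum_le_sum hle)
    have htight := (sum_eq_sum_iff_of_le hle).mp (h.trans hsumT.symm)
    obtain ⟨i₀, -, hi₀⟩ := exists_lt_of_sum_lt (s := univ) (f := fun _ => (0 : ℝ))
      (g := (colNormalize C · j)) (by simp only [sum_const_zero, hsumT, zero_lt_one])
    refine ⟨⟨i₀, (colNormalize_pos_iff hC i₀ j).mp hi₀⟩, fun i hi => ?_⟩
    have hT : colNormalize C i j ≠ 0 := ((colNormalize_pos_iff hC i j).mpr hi).ne'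
    exact ((rowNormalize_eq_one_iff hC i j).mp ((mul_eq_right₀ hT).mp (htight i (mem_univ i)))).2
  · rintro ⟨⟨i₀, hi₀⟩, hrows⟩
    have hc : 0 < ∑ k, C k j := hi₀.trans_le (single_le_sum (fun k _ => hC k j) (mem_univ i₀))
    calc ∑ i, rowNormalize C i j * colNormalize C i j = ∑ i, colNormalize C i j := by
          refine sum_congr rfl fun i _ => ?_
          rcases (hC i j).eq_or_lt with h0 | hpos
          · simp [colNormalize, ← h0]
          · rw [(rowNormalize_eq_one_iff hC i j).mpr ⟨hpos, hrows i hpos⟩, one_mul]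
      _ = 1 := sum_colNormalize_of_pos hc

end Normalization

section TeachingSet

variable {ι κ : Type*} {C : ι → κ → ℝ}

def IsTeachingRow (C : ι → κ → ℝ) (i : ι) (j : κ) : Prop :=
  C i j = 1 ∧ ∀ k, k ≠ j → C i k = 0

theorem IsTeachingRow.eq_of_ne_zero {i : ι} {j k : κ} (h : IsTeachingRow C i j)
    (hk : C i k ≠ 0) : k = j :=
  not_not.mp fun hne => hk (h.2 k hne)

theorem IsTeachingRow.unique {i : ι} {j j' : κ} (h : IsTeachingRow C i j)
    (h' : IsTeachingRow C i j') : j' = j :=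
  h.eq_of_ne_zero (h'.1 ▸ one_ne_zero)

-- Pigeonhole: the teaching rows of distinct columns are distinct, so they exhaust the rows.
theorem exists_isTeachingRow_of_forall {α : Type*} [Finite α] {C : α → α → ℝ}
    (h : ∀ j, ∃ i, IsTeachingRow C i j) (i : α) : ∃ j, IsTeachingRow C i j := by
  choose e he using h
  have he_inj : Function.Injective e := fun a b hab => (he b).unique (hab ▸ he a)
  obtain ⟨j, rfl⟩ := Finite.injective_iff_surjective.mp he_inj i
  exact ⟨j, he j⟩

theorem forall_exists_isTeachingRow_iff {α : Type*} [Finite α] {C : α → α → ℝ} :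
    (∀ j, ∃ i, IsTeachingRow C i j) ↔
      ∀ j, (∃ i, C i j = 1) ∧ ∀ i, C i j = 1 → ∀ k, k ≠ j → C i k = 0 := by
  constructor
  · intro h j
    obtain ⟨i, hi⟩ := h j
    refine ⟨⟨i, hi.1⟩, fun i' hi' => ?_⟩
    obtain ⟨j', hj'⟩ := exists_isTeachingRow_of_forall h i'
    exact hj'.eq_of_ne_zero (hi' ▸ one_ne_zero) ▸ hj'.2
  · intro h j
    obtain ⟨⟨i, hi⟩, hrows⟩ := h j
    exact ⟨i, hi, hrows i hi⟩

end TeachingSet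

/-- For a 0/1 consistency matrix `C` with row normalization `L` and
column normalization `T`, every concept has a teaching set (so the Average
Teaching Dimension is finite) iff `TI(L,T) = 1`. -/
theorem atd_finite_iff_TI_eq_one (N : ℕ) (hN : 0 < N)
    (C : Fin N → Fin N → ℝ)
    (hC : ∀ i j, C i j = 0 ∨ C i j = 1)
    (L T : Fin N → Fin N → ℝ)
    (hL : ∀ i j, L i j = if 0 < (∑ k, C i k) then C i j / (∑ k, C i k) else 0)
    (hT : ∀ i j, T i j = if 0 < (∑ k, C k j) then C i j / (∑ k, C k j) else 0) :
    (∀ j, ∃ i, C i j = 1 ∧ ∀ k, k ≠ j → C i k = 0) ↔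
      (1 / (N : ℝ)) * ∑ j, ∑ i, L i j * T i j = 1 := by
  obtain rfl : L = rowNormalize C := funext₂ hL
  obtain rfl : T = colNormalize C := funext₂ hT
  have hC0 : ∀ i j, 0 ≤ C i j := fun i j => by rcases hC i j with h | h <;> simp [h]
  have hpos : ∀ i j, 0 < C i j ↔ C i j = 1 := fun i j => by
    rcases hC i j with h | h <;> simp [h]
  have hcols : ∑ j, ∑ i, rowNormalize C i j * colNormalize C i j = N ↔
      ∀ j, ∑ i, rowNormalize C i j * colNormalize C i j = 1 := by
    simpa using sum_eq_sum_iff_of_le (s := univ) (g := fun _ => 1)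
      fun j _ => sum_rowNormalize_mul_colNormalize_le_one hC0 j
  rw [one_div, inv_mul_eq_one₀ (Nat.cast_ne_zero.mpr hN.ne'), eq_comm, hcols]
  simp only [sum_rowNormalize_mul_colNormalize_eq_one_iff hC0, hpos]
  exact forall_exists_isTeachingRow_iff
end

section
/- Let n be a positive integer and M : Fin n → Fin n → ℝ a nonnegative matrix with at least one positive diagonal, i.e., there exists a permutation σ of Fin n with M i (σ i) > 0 for all i. Then there exists a doubly stochastic matrix S (nonnegative entries, all row sums and all column sums equal to 1) such that both sequences of Sinkhorn iterates L⁽ᵏ⁾ and T⁽ᵏ⁾ converge entrywise to S as k → ∞. -/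
/-!
For a doubly stochastic `S` supported inside the support of `M`, the relative entropy
`kl S L⁽ᵏ⁾ = ∑ S log (S / L⁽ᵏ⁾)` changes in one Sinkhorn step by `∑ log rᵢ + ∑ log cⱼ`, where
`c` are the column sums of `L⁽ᵏ⁾` and `r` the row sums of `T⁽ᵏ⁾`. Both families of sums add up to
`n`, so by `log x ≤ x - 1` this increment is `≤ 0`. Taking for `S` the permutation matrix of a
positive diagonal gives a bounded-below decreasing sequence, so the increments tend to `0`, which
forces `c → 1`. Hence every limit point `Λ` of the row-stochastic `L⁽ᵏ⁾` is doubly stochastic and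
supported inside the support of `M`; then `kl Λ L⁽ᵏ⁾` is decreasing and tends to `0` along a
subsequence, so it tends to `0`, and this forces `L⁽ᵏ⁾ → Λ`, and `T⁽ᵏ⁾ = L⁽ᵏ⁾ / c → Λ`.
-/

open Finset

/-- Row normalization: `R(A) i j = A i j / ∑ k, A i k`. -/
noncomputable def rowNorm {n : ℕ} (A : Fin n → Fin n → ℝ) : Fin n → Fin n → ℝ :=
  fun i j => A i j / ∑ k, A i k

/-- Column normalization: `N(A) i j = A i j / ∑ k, A k j`. -/
noncomputable def colNorm {n : ℕ} (A : Fin n → Fin n → ℝ) : Fin n → Fin n → ℝ :=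
  fun i j => A i j / ∑ k, A k j

/-- Sinkhorn iterates `L⁽ᵏ⁺¹⁾`: `sinkhornL M 0 = L⁽¹⁾ = R(M)`,
`sinkhornL M (k+1) = L⁽ᵏ⁺²⁾ = R(N(L⁽ᵏ⁺¹⁾))`. -/
noncomputable def sinkhornL {n : ℕ} (M : Fin n → Fin n → ℝ) : ℕ → (Fin n → Fin n → ℝ)
  | 0 => rowNorm M
  | k + 1 => rowNorm (colNorm (sinkhornL M k))

/-- Sinkhorn iterates `T⁽ᵏ⁺¹⁾ = N(L⁽ᵏ⁺¹⁾)`. -/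
noncomputable def sinkhornT {n : ℕ} (M : Fin n → Fin n → ℝ) (k : ℕ) : Fin n → Fin n → ℝ :=
  colNorm (sinkhornL M k)

open Filter Real Topology Matrix

namespace Sinkhorn

noncomputable def klTerm (s a : ℝ) : ℝ := s * log (s / a) - s + a

lemma klTerm_one (x : ℝ) : klTerm 1 x = x - 1 - log x := by
  simp only [klTerm, one_div, log_inv, one_mul]
  ring

lemma klTerm_eq_mul_klTerm_one {s : ℝ} (hs : s ≠ 0) (a : ℝ) :
    klTerm s a = s * klTerm 1 (a / s) := by
  rw [klTerm_one, klTerm, ← inv_div, log_inv]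
  field_simp
  ring

lemma klTerm_nonneg {s a : ℝ} (hs : 0 ≤ s) (ha : 0 ≤ a) (hsa : 0 < s → 0 < a) :
    0 ≤ klTerm s a := by
  rcases hs.eq_or_lt with rfl | hs
  · simpa [klTerm] using ha
  · rw [klTerm_eq_mul_klTerm_one hs.ne', klTerm_one]
    have := log_le_sub_one_of_pos (div_pos (hsa hs) hs)
    exact mul_nonneg hs.le (by linarith)

lemma sq_sqrt_sub_one_le_klTerm_one {x : ℝ} (hx : 0 < x) : (√x - 1) ^ 2 ≤ klTerm 1 x := by
  have hlog : log x = 2 * log √x := by rw [log_sqrt hx.le]; ring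
  have := log_le_sub_one_of_pos (sqrt_pos.2 hx)
  rw [klTerm_one]
  nlinarith [sq_sqrt hx.le]

lemma tendsto_one_of_klTerm_one_tendsto_zero {x : ℕ → ℝ} (hx : ∀ k, 0 < x k)
    (h : Tendsto (fun k => klTerm 1 (x k)) atTop (𝓝 0)) : Tendsto x atTop (𝓝 1) := by
  have hsqrt : Tendsto (fun k => √(x k)) atTop (𝓝 1) := by
    rw [tendsto_iff_norm_sub_tendsto_zero]
    refine squeeze_zero (fun _ => norm_nonneg _) (fun k => ?_) (by simpa using h.sqrt)
    rw [Real.norm_eq_abs, ← sqrt_sq_eq_abs]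
    exact sqrt_le_sqrt (sq_sqrt_sub_one_le_klTerm_one (hx k))
  simpa [sq_sqrt (hx _).le] using hsqrt.pow 2

lemma tendsto_of_klTerm_tendsto_zero {s : ℝ} {a : ℕ → ℝ} (hs : 0 ≤ s)
    (hsa : 0 < s → ∀ k, 0 < a k) (h : Tendsto (fun k => klTerm s (a k)) atTop (𝓝 0)) :
    Tendsto a atTop (𝓝 s) := by
  rcases hs.eq_or_lt with rfl | hs
  · simpa [klTerm] using h
  · have hratio : Tendsto (fun k => a k / s) atTop (𝓝 1) := by
      refine tendsto_one_of_klTerm_one_tendsto_zero (fun k => div_pos (hsa hs k) hs) ?_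
      have := h.div_const s
      simp only [zero_div] at this
      refine this.congr fun k => ?_
      rw [klTerm_eq_mul_klTerm_one hs.ne', mul_div_cancel_left₀ _ hs.ne']
    simpa [div_mul_cancel₀ _ hs.ne'] using hratio.mul_const s

section KL

variable {ι κ : Type*} [Fintype ι] [Fintype κ]

/-- With the junk value `log (s / 0) = 0` this is the relative entropy of `S` with respect to `A`
only when `A` is positive wherever `S` is. -/
noncomputable def kl (S A : Matrix ι κ ℝ) : ℝ := ∑ i, ∑ j, S i j * log (S i j / A i j)

lemma kl_eq_sum_klTerm {S A : Matrix ι κ ℝ} (hmass : ∑ i, ∑ j, A i j = ∑ i, ∑ j, S i j) :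
    kl S A = ∑ i, ∑ j, klTerm (S i j) (A i j) := by
  simp only [klTerm, Finset.sum_add_distrib, Finset.sum_sub_distrib, hmass, kl]
  ring

variable {S A : Matrix ι κ ℝ}

lemma kl_nonneg (hS : ∀ i j, 0 ≤ S i j) (hA : ∀ i j, 0 ≤ A i j)
    (hSA : ∀ i j, 0 < S i j → 0 < A i j) (hmass : ∑ i, ∑ j, A i j = ∑ i, ∑ j, S i j) :
    0 ≤ kl S A := by
  rw [kl_eq_sum_klTerm hmass]
  exact Finset.sum_nonneg fun i _ => Finset.sum_nonneg fun j _ =>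
    klTerm_nonneg (hS i j) (hA i j) (hSA i j)

lemma klTerm_le_kl (hS : ∀ i j, 0 ≤ S i j) (hA : ∀ i j, 0 ≤ A i j)
    (hSA : ∀ i j, 0 < S i j → 0 < A i j) (hmass : ∑ i, ∑ j, A i j = ∑ i, ∑ j, S i j)
    (i : ι) (j : κ) : klTerm (S i j) (A i j) ≤ kl S A := by
  have hterm i j := klTerm_nonneg (hS i j) (hA i j) (hSA i j)
  rw [kl_eq_sum_klTerm hmass]
  calc klTerm (S i j) (A i j) ≤ ∑ j', klTerm (S i j') (A i j') :=
        Finset.single_le_sum (fun j' _ => hterm i j') (Finset.mem_univ j)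
    _ ≤ ∑ i', ∑ j', klTerm (S i' j') (A i' j') :=
        Finset.single_le_sum (f := fun i' => ∑ j', klTerm (S i' j') (A i' j'))
          (fun i' _ => Finset.sum_nonneg fun j' _ => hterm i' j') (Finset.mem_univ i)

end KL

lemma kl_div_mul {m : Type*} [Fintype m] [DecidableEq m] {S A : Matrix m m ℝ}
    (hS : S ∈ doublyStochastic ℝ m) (hSA : ∀ i j, 0 < S i j → 0 < A i j)
    {r c : m → ℝ} (hr : ∀ i, 0 < r i) (hc : ∀ j, 0 < c j) :
    kl S (fun i j => A i j / (r i * c j)) = kl S A + ∑ i, log (r i) + ∑ j, log (c j) := by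
  have hterm i j : S i j * log (S i j / (A i j / (r i * c j)))
      = S i j * log (S i j / A i j) + S i j * log (r i) + S i j * log (c j) := by
    rcases (nonneg_of_mem_doublyStochastic hS).eq_or_lt with h | h
    · rw [← h]; ring
    · rw [div_div_eq_mul_div, mul_div_right_comm, log_mul (by have := hSA i j h; positivity)
        (mul_pos (hr i) (hc j)).ne', log_mul (hr i).ne' (hc j).ne']
      ring
  have hrow : ∑ i, ∑ j, S i j * log (r i) = ∑ i, log (r i) := by
    simp [← Finset.sum_mul, sum_row_of_mem_doublyStochastic hS]
  have hcol : ∑ i, ∑ j, S i j * log (c j) = ∑ j, log (c j) := by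
    rw [Finset.sum_comm]
    simp [← Finset.sum_mul, sum_col_of_mem_doublyStochastic hS]
  simp only [kl, hterm, Finset.sum_add_distrib, hrow, hcol]

lemma sum_klTerm_one_eq_neg_sum_log {m : Type*} [Fintype m] {x : m → ℝ}
    (hx : ∑ i, x i = Fintype.card m) : ∑ i, klTerm 1 (x i) = -∑ i, log (x i) := by
  simp [klTerm_one, Finset.sum_sub_distrib, hx]

lemma sum_log_nonpos {m : Type*} [Fintype m] {x : m → ℝ} (hpos : ∀ i, 0 < x i)
    (hx : ∑ i, x i = Fintype.card m) : ∑ i, log (x i) ≤ 0 := by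
  have := Finset.sum_nonneg fun i (_ : i ∈ Finset.univ) =>
    klTerm_nonneg zero_le_one (hpos i).le fun _ => hpos i
  rw [sum_klTerm_one_eq_neg_sum_log hx] at this
  linarith

lemma tendsto_succ_sub_of_antitone {a : ℕ → ℝ} (ha : Antitone a)
    (hbdd : BddBelow (Set.range a)) : Tendsto (fun k => a (k + 1) - a k) atTop (𝓝 0) := by
  have hlim := tendsto_atTop_ciInf ha hbdd
  simpa using (hlim.comp (tendsto_add_atTop_nat 1)).sub hlim

lemma tendsto_mul_log_div {α : Type*} {l : Filter α} {s : ℝ} {a : α → ℝ}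
    (ha : Tendsto a l (𝓝 s)) : Tendsto (fun k => s * log (s / a k)) l (𝓝 0) := by
  rcases eq_or_ne s 0 with rfl | hs
  · simpa using tendsto_const_nhds
  · have hlog : Tendsto (fun k => log (s / a k)) l (𝓝 0) := by
      simpa [hs] using (tendsto_const_nhds.div ha hs).log (div_ne_zero hs hs)
    simpa using hlog.const_mul s

section Normalization

variable {n : ℕ} {A : Fin n → Fin n → ℝ}

lemma rowNorm_nonneg (hA : ∀ i j, 0 ≤ A i j) (i j : Fin n) : 0 ≤ rowNorm A i j :=
  div_nonneg (hA i j) (Finset.sum_nonneg fun k _ => hA i k)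

lemma colNorm_nonneg (hA : ∀ i j, 0 ≤ A i j) (i j : Fin n) : 0 ≤ colNorm A i j :=
  div_nonneg (hA i j) (Finset.sum_nonneg fun k _ => hA k j)

lemma sum_rowNorm {i : Fin n} (h : ∑ k, A i k ≠ 0) : ∑ j, rowNorm A i j = 1 := by
  simp only [rowNorm, ← Finset.sum_div, div_self h]

lemma sum_colNorm {j : Fin n} (h : ∑ k, A k j ≠ 0) : ∑ i, colNorm A i j = 1 := by
  simp only [colNorm, ← Finset.sum_div, div_self h]

lemma rowNorm_pos_iff {i j : Fin n} (h : 0 < ∑ k, A i k) : 0 < rowNorm A i j ↔ 0 < A i j :=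
  div_pos_iff_of_pos_right h

lemma colNorm_pos_iff {i j : Fin n} (h : 0 < ∑ k, A k j) : 0 < colNorm A i j ↔ 0 < A i j :=
  div_pos_iff_of_pos_right h

end Normalization

def SameSupport {n : ℕ} (M A : Fin n → Fin n → ℝ) : Prop :=
  ∀ i j, 0 ≤ A i j ∧ (0 < A i j ↔ 0 < M i j)

namespace SameSupport

variable {n : ℕ} {M A : Fin n → Fin n → ℝ} {σ : Equiv.Perm (Fin n)}

lemma self (hM : ∀ i j, 0 ≤ M i j) : SameSupport M M := fun i j => ⟨hM i j, Iff.rfl⟩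

lemma sum_row_pos (hA : SameSupport M A) (hσ : ∀ i, 0 < M i (σ i)) (i : Fin n) :
    0 < ∑ j, A i j :=
  Finset.sum_pos' (fun j _ => (hA i j).1) ⟨σ i, Finset.mem_univ _, (hA i (σ i)).2.2 (hσ i)⟩

lemma sum_col_pos (hA : SameSupport M A) (hσ : ∀ i, 0 < M i (σ i)) (j : Fin n) :
    0 < ∑ i, A i j :=
  Finset.sum_pos' (fun i _ => (hA i j).1)
    ⟨σ.symm j, Finset.mem_univ _, (hA _ j).2.2 (by simpa using hσ (σ.symm j))⟩

lemma rowNorm (hA : SameSupport M A) (hσ : ∀ i, 0 < M i (σ i)) : SameSupport M (rowNorm A) :=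
  fun i j => ⟨rowNorm_nonneg (fun i j => (hA i j).1) i j,
    (rowNorm_pos_iff (hA.sum_row_pos hσ i)).trans (hA i j).2⟩

lemma colNorm (hA : SameSupport M A) (hσ : ∀ i, 0 < M i (σ i)) : SameSupport M (colNorm A) :=
  fun i j => ⟨colNorm_nonneg (fun i j => (hA i j).1) i j,
    (colNorm_pos_iff (hA.sum_col_pos hσ j)).trans (hA i j).2⟩

end SameSupport

section Iterates

variable {n : ℕ} {M : Fin n → Fin n → ℝ}

lemma sinkhornT_apply (k : ℕ) (i j : Fin n) :
    sinkhornT M k i j = sinkhornL M k i j / ∑ i', sinkhornL M k i' j :=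
  rfl

lemma sinkhornL_succ_apply (k : ℕ) (i j : Fin n) :
    sinkhornL M (k + 1) i j
      = sinkhornL M k i j / ((∑ j', sinkhornT M k i j') * ∑ i', sinkhornL M k i' j) := by
  rw [mul_comm, ← div_div]
  rfl

end Iterates

section PositiveDiagonal

variable {n : ℕ} {M : Fin n → Fin n → ℝ} {σ : Equiv.Perm (Fin n)}
  (hM : ∀ i j, 0 ≤ M i j) (hσ : ∀ i, 0 < M i (σ i))
include hM hσ

lemma sameSupport_sinkhornL : ∀ k, SameSupport M (sinkhornL M k)
  | 0 => (SameSupport.self hM).rowNorm hσ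
  | k + 1 => ((sameSupport_sinkhornL k).colNorm hσ).rowNorm hσ

lemma sameSupport_sinkhornT (k : ℕ) : SameSupport M (sinkhornT M k) :=
  (sameSupport_sinkhornL hM hσ k).colNorm hσ

lemma sum_row_sinkhornL (k : ℕ) (i : Fin n) : ∑ j, sinkhornL M k i j = 1 := by
  cases k with
  | zero => exact sum_rowNorm ((SameSupport.self hM).sum_row_pos hσ i).ne'
  | succ k => exact sum_rowNorm ((sameSupport_sinkhornT hM hσ k).sum_row_pos hσ i).ne'

lemma sum_col_sinkhornT (k : ℕ) (j : Fin n) : ∑ i, sinkhornT M k i j = 1 :=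
  sum_colNorm ((sameSupport_sinkhornL hM hσ k).sum_col_pos hσ j).ne'

lemma sum_log_sum_row_sinkhornT_nonpos (k : ℕ) : ∑ i, log (∑ j, sinkhornT M k i j) ≤ 0 := by
  refine sum_log_nonpos ((sameSupport_sinkhornT hM hσ k).sum_row_pos hσ) ?_
  rw [Finset.sum_comm]
  simp [sum_col_sinkhornT hM hσ k]

lemma sum_log_sum_col_sinkhornL_nonpos (k : ℕ) : ∑ j, log (∑ i, sinkhornL M k i j) ≤ 0 := by
  refine sum_log_nonpos ((sameSupport_sinkhornL hM hσ k).sum_col_pos hσ) ?_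
  rw [Finset.sum_comm]
  simp [sum_row_sinkhornL hM hσ k]

section Lyapunov

variable {S : Matrix (Fin n) (Fin n) ℝ} (hS : S ∈ doublyStochastic ℝ (Fin n))
include hS

lemma sum_sum_sinkhornL_eq (k : ℕ) : ∑ i, ∑ j, sinkhornL M k i j = ∑ i, ∑ j, S i j := by
  simp [sum_row_sinkhornL hM hσ k, sum_row_of_mem_doublyStochastic hS]

variable (hSM : ∀ i j, 0 < S i j → 0 < M i j)
include hSM

lemma kl_sinkhornL_succ (k : ℕ) :
    kl S (sinkhornL M (k + 1)) = kl S (sinkhornL M k)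
      + ∑ i, log (∑ j, sinkhornT M k i j) + ∑ j, log (∑ i, sinkhornL M k i j) := by
  rw [show sinkhornL M (k + 1) = _ from funext₂ (sinkhornL_succ_apply k)]
  exact kl_div_mul hS (fun i j h => ((sameSupport_sinkhornL hM hσ k) i j).2.2 (hSM i j h))
    ((sameSupport_sinkhornT hM hσ k).sum_row_pos hσ)
    ((sameSupport_sinkhornL hM hσ k).sum_col_pos hσ)

lemma antitone_kl_sinkhornL : Antitone fun k => kl S (sinkhornL M k) :=
  antitone_nat_of_succ_le fun k => by
    rw [kl_sinkhornL_succ hM hσ hS hSM k]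
    linarith [sum_log_sum_row_sinkhornT_nonpos hM hσ k, sum_log_sum_col_sinkhornL_nonpos hM hσ k]

lemma klTerm_le_kl_sinkhornL (k : ℕ) (i j : Fin n) :
    klTerm (S i j) (sinkhornL M k i j) ≤ kl S (sinkhornL M k) :=
  klTerm_le_kl (fun _ _ => nonneg_of_mem_doublyStochastic hS)
    (fun i j => ((sameSupport_sinkhornL hM hσ k) i j).1)
    (fun i j h => ((sameSupport_sinkhornL hM hσ k) i j).2.2 (hSM i j h))
    (sum_sum_sinkhornL_eq hM hσ hS k) i j

lemma kl_sinkhornL_nonneg (k : ℕ) : 0 ≤ kl S (sinkhornL M k) :=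
  kl_nonneg (fun _ _ => nonneg_of_mem_doublyStochastic hS)
    (fun i j => ((sameSupport_sinkhornL hM hσ k) i j).1)
    (fun i j h => ((sameSupport_sinkhornL hM hσ k) i j).2.2 (hSM i j h))
    (sum_sum_sinkhornL_eq hM hσ hS k)

end Lyapunov

lemma tendsto_sum_log_sum_col_sinkhornL :
    Tendsto (fun k => ∑ j, log (∑ i, sinkhornL M k i j)) atTop (𝓝 0) := by
  have hPM : ∀ i j, 0 < σ.permMatrix ℝ i j → 0 < M i j := by
    intro i j h
    obtain rfl : σ i = j := by
      by_contra hne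
      simp [Equiv.Perm.permMatrix, PEquiv.toMatrix_apply, hne] at h
    exact hσ i
  have hP : σ.permMatrix ℝ ∈ doublyStochastic ℝ (Fin n) := permMatrix_mem_doublyStochastic
  have hstep := tendsto_succ_sub_of_antitone (antitone_kl_sinkhornL hM hσ hP hPM)
    ⟨0, by rintro _ ⟨k, rfl⟩; exact kl_sinkhornL_nonneg hM hσ hP hPM k⟩
  refine tendsto_of_tendsto_of_tendsto_of_le_of_le hstep tendsto_const_nhds (fun k => ?_)
    (sum_log_sum_col_sinkhornL_nonpos hM hσ)
  simp only [kl_sinkhornL_succ hM hσ hP hPM k]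
  linarith [sum_log_sum_row_sinkhornT_nonpos hM hσ k]

lemma tendsto_sum_col_sinkhornL (j : Fin n) :
    Tendsto (fun k => ∑ i, sinkhornL M k i j) atTop (𝓝 1) := by
  have hpos k := (sameSupport_sinkhornL hM hσ k).sum_col_pos hσ
  refine tendsto_one_of_klTerm_one_tendsto_zero (fun k => hpos k j) ?_
  refine squeeze_zero (fun k => klTerm_nonneg zero_le_one (hpos k j).le fun _ => hpos k j)
    (fun k => ?_) (by simpa using (tendsto_sum_log_sum_col_sinkhornL hM hσ).neg)
  have hsum : ∑ j, ∑ i, sinkhornL M k i j = Fintype.card (Fin n) := by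
    rw [Finset.sum_comm]
    simp [sum_row_sinkhornL hM hσ k]
  rw [← sum_klTerm_one_eq_neg_sum_log hsum]
  exact Finset.single_le_sum (f := fun j => klTerm 1 (∑ i, sinkhornL M k i j))
    (fun j _ => klTerm_nonneg zero_le_one (hpos k j).le fun _ => hpos k j) (Finset.mem_univ j)

lemma exists_doublyStochastic_subseq_limit :
    ∃ Λ ∈ doublyStochastic ℝ (Fin n), (∀ i j, 0 < Λ i j → 0 < M i j) ∧
      ∃ φ : ℕ → ℕ, StrictMono φ ∧
        ∀ i j, Tendsto (fun m => sinkhornL M (φ m) i j) atTop (𝓝 (Λ i j)) := by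
  have hrows k : sinkhornL M k ∈ Set.univ.pi fun _ => stdSimplex ℝ (Fin n) := fun i _ =>
    ⟨fun j => ((sameSupport_sinkhornL hM hσ k) i j).1, sum_row_sinkhornL hM hσ k i⟩
  obtain ⟨Λ, hΛ, φ, hφ, hlim⟩ :=
    (isCompact_univ_pi fun _ => isCompact_stdSimplex ℝ (Fin n)).tendsto_subseq hrows
  have hentry i j : Tendsto (fun m => sinkhornL M (φ m) i j) atTop (𝓝 (Λ i j)) :=
    tendsto_pi_nhds.1 (tendsto_pi_nhds.1 hlim i) j
  refine ⟨Λ, mem_doublyStochastic_iff_sum.2 ⟨fun i j => (hΛ i trivial).1 j,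
    fun i => (hΛ i trivial).2, fun j => ?_⟩, fun i j h => ?_, φ, hφ, hentry⟩
  · exact tendsto_nhds_unique (tendsto_finsetSum _ fun i _ => hentry i j)
      ((tendsto_sum_col_sinkhornL hM hσ j).comp hφ.tendsto_atTop)
  · obtain ⟨m, hm⟩ := ((hentry i j).eventually (lt_mem_nhds h)).exists
    exact ((sameSupport_sinkhornL hM hσ (φ m)) i j).2.1 hm

lemma tendsto_kl_sinkhornL_zero {Λ : Matrix (Fin n) (Fin n) ℝ}
    (hΛ : Λ ∈ doublyStochastic ℝ (Fin n)) (hΛM : ∀ i j, 0 < Λ i j → 0 < M i j)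
    {φ : ℕ → ℕ} (hφ : StrictMono φ)
    (hlim : ∀ i j, Tendsto (fun m => sinkhornL M (φ m) i j) atTop (𝓝 (Λ i j))) :
    Tendsto (fun k => kl Λ (sinkhornL M k)) atTop (𝓝 0) := by
  rw [tendsto_iff_tendsto_subseq_of_antitone (antitone_kl_sinkhornL hM hσ hΛ hΛM)
    hφ.tendsto_atTop]
  simpa [Function.comp_def, kl] using tendsto_finsetSum _ fun i _ => tendsto_finsetSum _ fun j _ =>
    tendsto_mul_log_div (hlim i j)

lemma tendsto_sinkhornL_of_tendsto_kl {Λ : Matrix (Fin n) (Fin n) ℝ}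
    (hΛ : Λ ∈ doublyStochastic ℝ (Fin n)) (hΛM : ∀ i j, 0 < Λ i j → 0 < M i j)
    (hkl : Tendsto (fun k => kl Λ (sinkhornL M k)) atTop (𝓝 0)) (i j : Fin n) :
    Tendsto (fun k => sinkhornL M k i j) atTop (𝓝 (Λ i j)) := by
  have hsupp k (h : 0 < Λ i j) : 0 < sinkhornL M k i j :=
    ((sameSupport_sinkhornL hM hσ k) i j).2.2 (hΛM i j h)
  refine tendsto_of_klTerm_tendsto_zero (nonneg_of_mem_doublyStochastic hΛ)
    (fun h k => hsupp k h) (squeeze_zero (fun k => ?_)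
      (fun k => klTerm_le_kl_sinkhornL hM hσ hΛ hΛM k i j) hkl)
  exact klTerm_nonneg (nonneg_of_mem_doublyStochastic hΛ)
    ((sameSupport_sinkhornL hM hσ k) i j).1 (hsupp k)

end PositiveDiagonal

end Sinkhorn

open Sinkhorn

theorem sinkhorn_converges_general (n : ℕ) (M : Fin n → Fin n → ℝ)
    (hMnn : ∀ i j, 0 ≤ M i j)
    (hdiag : ∃ σ : Equiv.Perm (Fin n), ∀ i, 0 < M i (σ i)) :
    ∃ S : Fin n → Fin n → ℝ,
      (∀ i j, 0 ≤ S i j) ∧ (∀ i, (∑ j, S i j) = 1) ∧ (∀ j, (∑ i, S i j) = 1) ∧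
      (∀ i j, Filter.Tendsto (fun k => sinkhornL M k i j) Filter.atTop (nhds (S i j))) ∧
      (∀ i j, Filter.Tendsto (fun k => sinkhornT M k i j) Filter.atTop (nhds (S i j))) := by
  obtain ⟨σ, hσ⟩ := hdiag
  obtain ⟨Λ, hΛ, hΛM, φ, hφ, hlim⟩ := exists_doublyStochastic_subseq_limit hMnn hσ
  have hL := tendsto_sinkhornL_of_tendsto_kl hMnn hσ hΛ hΛM
    (tendsto_kl_sinkhornL_zero hMnn hσ hΛ hΛM hφ hlim)
  refine ⟨Λ, fun i j => nonneg_of_mem_doublyStochastic hΛ, sum_row_of_mem_doublyStochastic hΛ,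
    sum_col_of_mem_doublyStochastic hΛ, hL, fun i j => ?_⟩
  simpa [sinkhornT_apply, Pi.div_def] using
    (hL i j).div (tendsto_sum_col_sinkhornL hMnn hσ j) one_ne_zero

/-- Sinkhorn's theorem: if the nonnegative square matrix `M` has a
positive diagonal, then both sequences of Sinkhorn iterates converge entrywise
to a common doubly stochastic matrix `S`. -/
theorem sinkhorn_converges (n : ℕ) (hn : 0 < n) (M : Fin n → Fin n → ℝ)
    (hMnn : ∀ i j, 0 ≤ M i j)
    (hdiag : ∃ σ : Equiv.Perm (Fin n), ∀ i, 0 < M i (σ i)) :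
    ∃ S : Fin n → Fin n → ℝ,
      (∀ i j, 0 ≤ S i j) ∧ (∀ i, (∑ j, S i j) = 1) ∧ (∀ j, (∑ i, S i j) = 1) ∧
      (∀ i j, Filter.Tendsto (fun k => sinkhornL M k i j) Filter.atTop (nhds (S i j))) ∧
      (∀ i j, Filter.Tendsto (fun k => sinkhornT M k i j) Filter.atTop (nhds (S i j))) :=
  sinkhorn_converges_general n M hMnn hdiag
end

section
/- Let n be a positive integer and M : Fin n → Fin n → ℝ a nonnegative matrix with at least one positive diagonal, and suppose the Sinkhorn iterates of M converge entrywise to a doubly stochastic matrix S. Then for every permutation σ of Fin n that is a positive diagonal of M (i.e., M i (σ i) > 0 for all i), the limit satisfies S i (σ i) > 0 for all i; that is, entries of M lying on a positive diagonal do not tend to zero under the iteration. -/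
open Finset

/-!
Fix a positive diagonal `σ` of `M`. Every iterate `A` stays nonnegative and positive on `σ`, and
the product `∏ i, A i (σ i)` never decreases: a row (column) normalization divides
it by the product of the row (column) sums, and when the columns (rows) already sum to `1` these
`n` sums add up to `n`, so by AM-GM their product is at most `1`. The diagonal product of the
limit `S` is therefore at least that of `R(M)`, which is positive.
-/

namespace Real

theorem prod_le_one_of_sum_eq_card {ι : Type*} [Fintype ι] {x : ι → ℝ} (hx : ∀ i, 0 ≤ x i)
    (hsum : ∑ i, x i = Fintype.card ι) : ∏ i, x i ≤ 1 := by
  cases isEmpty_or_nonempty ι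
  · simp
  have hcard : (0 : ℝ) < Fintype.card ι := by exact_mod_cast Fintype.card_pos
  have hamgm := geom_mean_le_arith_mean univ (fun _ => 1) x (fun _ _ => zero_le_one)
    (by simpa using hcard) (fun i _ => hx i)
  simp only [rpow_one, one_mul, sum_const, card_univ, nsmul_eq_mul, mul_one, hsum,
    div_self hcard.ne'] at hamgm
  simpa using (rpow_inv_le_iff_of_pos (prod_nonneg fun i _ => hx i) zero_le_one hcard).1 hamgm

end Real

section Normalization

variable {n : ℕ} {A : Fin n → Fin n → ℝ} {σ : Equiv.Perm (Fin n)}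

theorem rowNorm_nonneg (hA : ∀ i j, 0 ≤ A i j) (i j : Fin n) : 0 ≤ rowNorm A i j :=
  div_nonneg (hA i j) (sum_nonneg fun k _ => hA i k)

theorem colNorm_nonneg (hA : ∀ i j, 0 ≤ A i j) (i j : Fin n) : 0 ≤ colNorm A i j :=
  div_nonneg (hA i j) (sum_nonneg fun k _ => hA k j)

theorem sum_row_pos_of_pos_diag (hA : ∀ i j, 0 ≤ A i j) (hσ : ∀ i, 0 < A i (σ i)) (i : Fin n) :
    0 < ∑ j, A i j :=
  sum_pos' (fun j _ => hA i j) ⟨σ i, mem_univ _, hσ i⟩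

theorem sum_col_pos_of_pos_diag (hA : ∀ i j, 0 ≤ A i j) (hσ : ∀ i, 0 < A i (σ i)) (j : Fin n) :
    0 < ∑ i, A i j :=
  sum_pos' (fun i _ => hA i j) ⟨σ.symm j, mem_univ _, by simpa using hσ (σ.symm j)⟩

theorem rowNorm_pos_diag (hA : ∀ i j, 0 ≤ A i j) (hσ : ∀ i, 0 < A i (σ i)) (i : Fin n) :
    0 < rowNorm A i (σ i) :=
  div_pos (hσ i) (sum_row_pos_of_pos_diag hA hσ i)

theorem colNorm_pos_diag (hA : ∀ i j, 0 ≤ A i j) (hσ : ∀ i, 0 < A i (σ i)) (i : Fin n) :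
    0 < colNorm A i (σ i) :=
  div_pos (hσ i) (sum_col_pos_of_pos_diag hA hσ (σ i))

theorem sum_rowNorm {i : Fin n} (h : ∑ k, A i k ≠ 0) : ∑ j, rowNorm A i j = 1 := by
  simp only [rowNorm, ← sum_div, div_self h]

theorem sum_colNorm {j : Fin n} (h : ∑ k, A k j ≠ 0) : ∑ i, colNorm A i j = 1 := by
  simp only [colNorm, ← sum_div, div_self h]

theorem prod_rowNorm_diag :
    ∏ i, rowNorm A i (σ i) = (∏ i, A i (σ i)) / ∏ i, ∑ j, A i j :=
  prod_div_distrib _ _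

theorem prod_colNorm_diag :
    ∏ i, colNorm A i (σ i) = (∏ i, A i (σ i)) / ∏ j, ∑ i, A i j := by
  rw [← Equiv.prod_comp σ (fun j => ∑ i, A i j)]
  exact prod_div_distrib _ _

theorem prod_diag_le_prod_rowNorm_diag (hA : ∀ i j, 0 ≤ A i j) (hσ : ∀ i, 0 < A i (σ i))
    (hcol : ∀ j, ∑ i, A i j = 1) : ∏ i, A i (σ i) ≤ ∏ i, rowNorm A i (σ i) := by
  have hrows : ∏ i, ∑ j, A i j ≤ 1 := by
    refine Real.prod_le_one_of_sum_eq_card (fun i => sum_nonneg fun j _ => hA i j) ?_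
    simp [sum_comm (f := A), hcol]
  rw [prod_rowNorm_diag]
  exact le_div_self (prod_nonneg fun i _ => (hσ i).le)
    (prod_pos fun i _ => sum_row_pos_of_pos_diag hA hσ i) hrows

theorem prod_diag_le_prod_colNorm_diag (hA : ∀ i j, 0 ≤ A i j) (hσ : ∀ i, 0 < A i (σ i))
    (hrow : ∀ i, ∑ j, A i j = 1) : ∏ i, A i (σ i) ≤ ∏ i, colNorm A i (σ i) := by
  have hcols : ∏ j, ∑ i, A i j ≤ 1 := by
    refine Real.prod_le_one_of_sum_eq_card (fun j => sum_nonneg fun i _ => hA i j) ?_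
    simp [← sum_comm (f := A), hrow]
  rw [prod_colNorm_diag]
  exact le_div_self (prod_nonneg fun i _ => (hσ i).le)
    (prod_pos fun j _ => sum_col_pos_of_pos_diag hA hσ j) hcols

end Normalization

section Sinkhorn

variable {n : ℕ} {M : Fin n → Fin n → ℝ} {σ : Equiv.Perm (Fin n)}

theorem sinkhornL_nonneg (hM : ∀ i j, 0 ≤ M i j) (k : ℕ) (i j : Fin n) :
    0 ≤ sinkhornL M k i j := by
  induction k generalizing i j with
  | zero => exact rowNorm_nonneg hM i j
  | succ k ih => exact rowNorm_nonneg (colNorm_nonneg ih) i j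

theorem sinkhornL_pos_diag (hM : ∀ i j, 0 ≤ M i j) (hσ : ∀ i, 0 < M i (σ i)) (k : ℕ)
    (i : Fin n) : 0 < sinkhornL M k i (σ i) := by
  induction k generalizing i with
  | zero => exact rowNorm_pos_diag hM hσ i
  | succ k ih =>
    exact rowNorm_pos_diag (colNorm_nonneg (sinkhornL_nonneg hM k))
      (colNorm_pos_diag (sinkhornL_nonneg hM k) ih) i

theorem sum_sinkhornL (hM : ∀ i j, 0 ≤ M i j) (hσ : ∀ i, 0 < M i (σ i)) (k : ℕ) (i : Fin n) :
    ∑ j, sinkhornL M k i j = 1 := by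
  cases k with
  | zero => exact sum_rowNorm (sum_row_pos_of_pos_diag hM hσ i).ne'
  | succ k =>
    have hL := sinkhornL_nonneg hM k
    exact sum_rowNorm (sum_row_pos_of_pos_diag (colNorm_nonneg hL)
      (colNorm_pos_diag hL (sinkhornL_pos_diag hM hσ k)) i).ne'

theorem prod_sinkhornL_diag_le_succ (hM : ∀ i j, 0 ≤ M i j) (hσ : ∀ i, 0 < M i (σ i))
    (k : ℕ) : ∏ i, sinkhornL M k i (σ i) ≤ ∏ i, sinkhornL M (k + 1) i (σ i) := by
  have hL := sinkhornL_nonneg hM k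
  have hLσ := sinkhornL_pos_diag hM hσ k
  calc ∏ i, sinkhornL M k i (σ i)
      ≤ ∏ i, colNorm (sinkhornL M k) i (σ i) :=
        prod_diag_le_prod_colNorm_diag hL hLσ (sum_sinkhornL hM hσ k)
    _ ≤ ∏ i, sinkhornL M (k + 1) i (σ i) :=
        prod_diag_le_prod_rowNorm_diag (colNorm_nonneg hL) (colNorm_pos_diag hL hLσ)
          fun j => sum_colNorm (sum_col_pos_of_pos_diag hL hLσ j).ne'

end Sinkhorn

theorem sinkhorn_limit_pos_on_positive_diagonal_general (n : ℕ)
    (M : Fin n → Fin n → ℝ)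
    (hMnn : ∀ i j, 0 ≤ M i j)
    (S : Fin n → Fin n → ℝ)
    (hSnn : ∀ i j, 0 ≤ S i j)
    (hconvL : ∀ i j, Filter.Tendsto (fun k => sinkhornL M k i j) Filter.atTop (nhds (S i j))) :
    ∀ σ : Equiv.Perm (Fin n), (∀ i, 0 < M i (σ i)) → ∀ i, 0 < S i (σ i) := by
  intro σ hσ i
  have hmono : Monotone fun k => ∏ i, sinkhornL M k i (σ i) :=
    monotone_nat_of_le_succ (prod_sinkhornL_diag_le_succ hMnn hσ)
  have hlim : Filter.Tendsto (fun k => ∏ i, sinkhornL M k i (σ i)) Filter.atTop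
      (nhds (∏ i, S i (σ i))) :=
    tendsto_finsetProd _ fun i _ => hconvL i (σ i)
  have hprod : 0 < ∏ i, S i (σ i) :=
    (prod_pos fun i _ => sinkhornL_pos_diag hMnn hσ 0 i).trans_le (hmono.ge_of_tendsto hlim 0)
  exact (hSnn i (σ i)).lt_of_ne fun h => hprod.ne' (prod_eq_zero (mem_univ i) h.symm)

/-- entries of `M` lying on a positive diagonal do not tend to zero
under the Sinkhorn iteration: the doubly stochastic limit `S` is positive on
every positive diagonal of `M`. -/
theorem sinkhorn_limit_pos_on_positive_diagonal (n : ℕ) (hn : 0 < n)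
    (M : Fin n → Fin n → ℝ)
    (hMnn : ∀ i j, 0 ≤ M i j)
    (hdiag : ∃ σ : Equiv.Perm (Fin n), ∀ i, 0 < M i (σ i))
    (S : Fin n → Fin n → ℝ)
    (hSnn : ∀ i j, 0 ≤ S i j)
    (hSrow : ∀ i, (∑ j, S i j) = 1) (hScol : ∀ j, (∑ i, S i j) = 1)
    (hconvL : ∀ i j, Filter.Tendsto (fun k => sinkhornL M k i j) Filter.atTop (nhds (S i j)))
    (hconvT : ∀ i j, Filter.Tendsto (fun k => sinkhornT M k i j) Filter.atTop (nhds (S i j))) :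
    ∀ σ : Equiv.Perm (Fin n), (∀ i, 0 < M i (σ i)) → ∀ i, 0 < S i (σ i) :=
  sinkhorn_limit_pos_on_positive_diagonal_general n M hMnn S hSnn hconvL
end

section
/- Let n be a positive integer, L : Fin n → Fin n → ℝ a nonnegative matrix whose every row sums to 1 and whose every column sum is positive, and let T be the column normalization of L (T i j = L i j / (∑_k L k j)). Let σ be a permutation of Fin n with L i (σ i) > 0 for all i. Then 0 < ∏_i L i (σ i) ≤ ∏_i T i (σ i) ≤ 1; the first inequality is an equality if and only if L is doubly stochastic, and the second is an equality if and only if T i (σ i) = 1 for all i. -/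
/-!
Writing `c j = ∑ k, L k j` for the column sums, `∏ i, T i (σ i) = (∏ i, L i (σ i)) / ∏ j, c j`.
Since the rows of `L` sum to `1`, the column sums have total `n`, so `∏ j, c j ≤ 1` by the
inequality `log x ≤ x - 1`, with equality exactly when every `c j = 1`. The upper bound holds
because each `T i (σ i)` lies in `(0, 1]`.
-/

open Finset

section ProductBounds

variable {ι : Type*} [Fintype ι]

theorem prod_lt_one_of_sum_eq_card {c : ι → ℝ} (hc : ∀ i, 0 < c i)
    (hsum : ∑ i, c i = Fintype.card ι) {j : ι} (hj : c j ≠ 1) : ∏ i, c i < 1 := by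
  have hlog : Real.log (∏ i, c i) < 0 :=
    calc Real.log (∏ i, c i) = ∑ i, Real.log (c i) := Real.log_prod fun i _ => (hc i).ne'
      _ < ∑ i, (c i - 1) := sum_lt_sum (fun i _ => Real.log_le_sub_one_of_pos (hc i))
          ⟨j, mem_univ j, Real.log_lt_sub_one_of_pos (hc j) hj⟩
      _ = 0 := by simp [sum_sub_distrib, hsum]
  exact (Real.log_neg_iff (prod_pos fun i _ => hc i)).mp hlog

theorem prod_eq_one_iff_of_sum_eq_card {c : ι → ℝ} (hc : ∀ i, 0 < c i)
    (hsum : ∑ i, c i = Fintype.card ι) : ∏ i, c i = 1 ↔ ∀ i, c i = 1 := by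
  refine ⟨fun hprod i => ?_, fun h => by simp [h]⟩
  by_contra hi
  exact (prod_lt_one_of_sum_eq_card hc hsum hi).ne hprod

theorem prod_le_one_of_sum_eq_card {c : ι → ℝ} (hc : ∀ i, 0 < c i)
    (hsum : ∑ i, c i = Fintype.card ι) : ∏ i, c i ≤ 1 := by
  by_cases h : ∀ i, c i = 1
  · exact ((prod_eq_one_iff_of_sum_eq_card hc hsum).mpr h).le
  · obtain ⟨j, hj⟩ := not_forall.mp h
    exact (prod_lt_one_of_sum_eq_card hc hsum hj).le

theorem prod_eq_one_iff_of_pos_of_le_one {R : Type*} [CommSemiring R] [PartialOrder R]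
    [IsStrictOrderedRing R] {f : ι → R} (hpos : ∀ i, 0 < f i) (hle : ∀ i, f i ≤ 1) :
    ∏ i, f i = 1 ↔ ∀ i, f i = 1 := by
  refine ⟨fun hprod i => ?_, fun h => by simp [h]⟩
  by_contra hi
  have hlt : ∏ k, f k < ∏ _k : ι, (1 : R) :=
    prod_lt_prod (fun k _ => hpos k) (fun k _ => hle k) ⟨i, mem_univ i, (hle i).lt_of_ne hi⟩
  simp [hprod] at hlt

end ProductBounds

section ColumnNormalization

variable {ι : Type*} [Fintype ι] (L : ι → ι → ℝ)

theorem sum_colSums_eq_card (hrow : ∀ i, ∑ j, L i j = 1) :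
    ∑ j, ∑ i, L i j = Fintype.card ι := by
  rw [sum_comm]
  simp [hrow]

theorem div_colSum_le_one (hL : ∀ i j, 0 ≤ L i j) (i j : ι) : L i j / ∑ k, L k j ≤ 1 :=
  div_le_one_of_le₀ (single_le_sum (fun k _ => hL k j) (mem_univ i))
    (sum_nonneg fun k _ => hL k j)

theorem prod_diag_div_colSum (σ : Equiv.Perm ι) :
    ∏ i, L i (σ i) / ∑ k, L k (σ i) = (∏ i, L i (σ i)) / ∏ j, ∑ k, L k j := by
  rw [prod_div_distrib, Equiv.prod_comp σ fun j => ∑ k, L k j]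

end ColumnNormalization

theorem diagonal_product_increases_general (n : ℕ)
    (L T : Fin n → Fin n → ℝ)
    (hLnn : ∀ i j, 0 ≤ L i j)
    (hLrow : ∀ i, (∑ j, L i j) = 1)
    (hLcol : ∀ j, 0 < (∑ i, L i j))
    (hT : ∀ i j, T i j = L i j / ∑ k, L k j)
    (σ : Equiv.Perm (Fin n))
    (hσ : ∀ i, 0 < L i (σ i)) :
    0 < (∏ i, L i (σ i)) ∧
    (∏ i, L i (σ i)) ≤ (∏ i, T i (σ i)) ∧
    (∏ i, T i (σ i)) ≤ 1 ∧
    ((∏ i, L i (σ i)) = (∏ i, T i (σ i)) ↔ ∀ j, (∑ i, L i j) = 1) ∧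
    ((∏ i, T i (σ i)) = 1 ↔ ∀ i, T i (σ i) = 1) := by
  have hcols := sum_colSums_eq_card L hLrow
  have hdiag_pos : 0 < ∏ i, L i (σ i) := prod_pos fun i _ => hσ i
  have hcols_pos : 0 < ∏ j, ∑ i, L i j := prod_pos fun j _ => hLcol j
  have hT_prod : ∏ i, T i (σ i) = (∏ i, L i (σ i)) / ∏ j, ∑ i, L i j := by
    simp only [hT]
    exact prod_diag_div_colSum L σ
  have hT_pos : ∀ i, 0 < T i (σ i) := fun i => (hT i (σ i)).symm ▸ div_pos (hσ i) (hLcol (σ i))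
  have hT_le : ∀ i, T i (σ i) ≤ 1 := fun i => (hT i (σ i)).symm ▸ div_colSum_le_one L hLnn i (σ i)
  refine ⟨hdiag_pos, ?_, prod_le_one (fun i _ => (hT_pos i).le) (fun i _ => hT_le i), ?_,
    prod_eq_one_iff_of_pos_of_le_one hT_pos hT_le⟩
  · rw [hT_prod]
    exact le_div_self hdiag_pos.le hcols_pos (prod_le_one_of_sum_eq_card hLcol hcols)
  · rw [hT_prod, eq_div_iff hcols_pos.ne', mul_eq_left₀ hdiag_pos.ne']
    exact prod_eq_one_iff_of_sum_eq_card hLcol hcols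

/-- for a row-stochastic `L` with positive column sums, column
normalization `T`, and a positive diagonal `σ` of `L`, we have
`0 < ∏ i, L i (σ i) ≤ ∏ i, T i (σ i) ≤ 1`, where the first inequality is an
equality iff `L` is doubly stochastic and the second iff `T i (σ i) = 1` for
all `i`. -/
theorem diagonal_product_increases (n : ℕ) (hn : 0 < n)
    (L T : Fin n → Fin n → ℝ)
    (hLnn : ∀ i j, 0 ≤ L i j)
    (hLrow : ∀ i, (∑ j, L i j) = 1)
    (hLcol : ∀ j, 0 < (∑ i, L i j))
    (hT : ∀ i j, T i j = L i j / ∑ k, L k j)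
    (σ : Equiv.Perm (Fin n))
    (hσ : ∀ i, 0 < L i (σ i)) :
    0 < (∏ i, L i (σ i)) ∧
    (∏ i, L i (σ i)) ≤ (∏ i, T i (σ i)) ∧
    (∏ i, T i (σ i)) ≤ 1 ∧
    ((∏ i, L i (σ i)) = (∏ i, T i (σ i)) ↔ ∀ j, (∑ i, L i j) = 1) ∧
    ((∏ i, T i (σ i)) = 1 ↔ ∀ i, T i (σ i) = 1) :=
  diagonal_product_increases_general n L T hLnn hLrow hLcol hT σ hσ
end

section
/- Let n be a positive integer and M : Fin n → Fin n → ℝ a nonnegative matrix with at least one positive diagonal, and suppose the Sinkhorn iterates of M converge entrywise to a doubly stochastic matrix S. Then the Cooperative Index CI(M) := (1/n) ∑_{i,j} (S i j)² equals 1 if and only if M has exactly one positive diagonal; equivalently, S is a permutation matrix if and only if there is a unique permutation σ of Fin n with M i (σ i) > 0 for all i. -/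
open Finset

/-!
Each Sinkhorn iterate is a diagonal scaling `d i * e j * M i j` of `M`. A diagonal scaling keeps
the zeros of `M` and multiplies every diagonal product `∏ i, M i (σ i)` by the same factor
`∏ d * ∏ e`, so ratios of diagonal products survive in the limit: `S` has exactly the positive
diagonals of `M`, given that it has one at all, which Birkhoff's theorem guarantees. By Birkhoff's
theorem again, a doubly stochastic matrix is a permutation matrix iff it has a unique positive
diagonal; and it is one iff `∑ i, ∑ j, S i j ^ 2 = n`, because `S i j ^ 2 ≤ S i j` with equality
only at the entries `0` and `1`.
-/

open Filter Topology

def IsDiagonalScaling {R ι κ : Type*} [Mul R] (A B : ι → κ → R) : Prop :=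
  ∃ (d : ι → R) (e : κ → R), ∀ i j, B i j = d i * e j * A i j

namespace IsDiagonalScaling

variable {R ι : Type*} [CommSemiring R] {A B C : ι → ι → R}

theorem trans (hAB : IsDiagonalScaling A B) (hBC : IsDiagonalScaling B C) :
    IsDiagonalScaling A C := by
  obtain ⟨d, e, hB⟩ := hAB
  obtain ⟨d', e', hC⟩ := hBC
  exact ⟨d' * d, e' * e, fun i j => by simp only [hC, hB, Pi.mul_apply]; ring⟩

theorem apply_eq_zero (h : IsDiagonalScaling A B) {i j : ι} (hA : A i j = 0) : B i j = 0 := by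
  obtain ⟨d, e, hB⟩ := h
  rw [hB, hA, mul_zero]

theorem prod_mul_prod_eq [Fintype ι] (h : IsDiagonalScaling A B) (ρ τ : Equiv.Perm ι) :
    (∏ i, B i (τ i)) * ∏ i, A i (ρ i) = (∏ i, B i (ρ i)) * ∏ i, A i (τ i) := by
  obtain ⟨d, e, hB⟩ := h
  simp only [hB, prod_mul_distrib, Equiv.prod_comp]
  ring

end IsDiagonalScaling

theorem isDiagonalScaling_rowNorm {n : ℕ} (A : Fin n → Fin n → ℝ) :
    IsDiagonalScaling A (rowNorm A) :=
  ⟨fun i => (∑ k, A i k)⁻¹, 1, fun i j => by simp only [rowNorm, Pi.one_apply]; ring⟩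

theorem isDiagonalScaling_colNorm {n : ℕ} (A : Fin n → Fin n → ℝ) :
    IsDiagonalScaling A (colNorm A) :=
  ⟨1, fun j => (∑ k, A k j)⁻¹, fun i j => by simp only [colNorm, Pi.one_apply]; ring⟩

theorem isDiagonalScaling_sinkhornL {n : ℕ} (M : Fin n → Fin n → ℝ) (k : ℕ) :
    IsDiagonalScaling M (sinkhornL M k) := by
  induction k with
  | zero => exact isDiagonalScaling_rowNorm M
  | succ k ih =>
    exact ih.trans ((isDiagonalScaling_colNorm _).trans (isDiagonalScaling_rowNorm _))

section Limits

variable {R ι α : Type*} [CommSemiring R] [TopologicalSpace R] [T2Space R]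
  {l : Filter α} [l.NeBot] {A S : ι → ι → R} {B : α → ι → ι → R}

theorem apply_eq_zero_of_tendsto (hB : ∀ k, IsDiagonalScaling A (B k))
    (hlim : ∀ i j, Tendsto (fun k => B k i j) l (𝓝 (S i j))) {i j : ι} (hA : A i j = 0) :
    S i j = 0 := by
  refine tendsto_nhds_unique (hlim i j) ?_
  simp only [(hB _).apply_eq_zero hA]
  exact tendsto_const_nhds

theorem prod_mul_prod_eq_of_tendsto [Fintype ι] [ContinuousMul R]
    (hB : ∀ k, IsDiagonalScaling A (B k))
    (hlim : ∀ i j, Tendsto (fun k => B k i j) l (𝓝 (S i j))) (ρ τ : Equiv.Perm ι) :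
    (∏ i, S i (τ i)) * ∏ i, A i (ρ i) = (∏ i, S i (ρ i)) * ∏ i, A i (τ i) := by
  have hprod (σ : Equiv.Perm ι) : Tendsto (fun k => ∏ i, B k i (σ i)) l (𝓝 (∏ i, S i (σ i))) :=
    tendsto_finsetProd _ fun i _ => hlim i (σ i)
  refine tendsto_nhds_unique ((hprod τ).mul_const _) ?_
  simp only [fun k => (hB k).prod_mul_prod_eq ρ τ]
  exact (hprod ρ).mul_const _

end Limits

theorem pos_diag_iff_of_tendsto {ι α : Type*} [Fintype ι] {l : Filter α} [l.NeBot]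
    {A S : ι → ι → ℝ} {B : α → ι → ι → ℝ} (hA : ∀ i j, 0 ≤ A i j) (hS : ∀ i j, 0 ≤ S i j)
    (hSdiag : ∃ ρ : Equiv.Perm ι, ∀ i, 0 < S i (ρ i)) (hB : ∀ k, IsDiagonalScaling A (B k))
    (hlim : ∀ i j, Tendsto (fun k => B k i j) l (𝓝 (S i j))) (τ : Equiv.Perm ι) :
    (∀ i, 0 < S i (τ i)) ↔ ∀ i, 0 < A i (τ i) := by
  have hsupp (i j : ι) (hSij : 0 < S i j) : 0 < A i j :=
    (hA i j).lt_of_ne' fun hAij => hSij.ne' (apply_eq_zero_of_tendsto hB hlim hAij)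
  refine ⟨fun hSτ i => hsupp _ _ (hSτ i), fun hAτ => ?_⟩
  obtain ⟨ρ, hSρ⟩ := hSdiag
  have hpos : 0 < (∏ i, S i (τ i)) * ∏ i, A i (ρ i) := by
    rw [prod_mul_prod_eq_of_tendsto hB hlim ρ τ]
    exact mul_pos (prod_pos fun i _ => hSρ i) (prod_pos fun i _ => hAτ i)
  intro i
  exact (hS _ _).lt_of_ne' fun h => hpos.ne' (by rw [prod_eq_zero (mem_univ i) h, zero_mul])

theorem Equiv.Perm.permMatrix_apply {R ι : Type*} [Zero R] [One R] [DecidableEq ι]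
    (σ : Equiv.Perm ι) (i j : ι) : σ.permMatrix R i j = if σ i = j then 1 else 0 := by
  simp [Equiv.Perm.permMatrix, PEquiv.toMatrix_apply]

section DoublyStochastic

variable {R ι : Type*} [Field R] [LinearOrder R] [IsStrictOrderedRing R] [Fintype ι]
  [DecidableEq ι] {S : Matrix ι ι R}

theorem pos_diag_of_eq_sum_perm {w : Equiv.Perm ι → R} (hw : ∀ σ, 0 ≤ w σ)
    (hS : ∑ σ, w σ • σ.permMatrix R = S) {τ : Equiv.Perm ι} (hτ : 0 < w τ) (i : ι) :
    0 < S i (τ i) := by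
  rw [← hS, Matrix.sum_apply]
  calc 0 < (w τ • τ.permMatrix R) i (τ i) := by simpa [Equiv.Perm.permMatrix_apply] using hτ
    _ ≤ ∑ σ, (w σ • σ.permMatrix R) i (τ i) :=
      single_le_sum (f := fun σ => (w σ • σ.permMatrix R) i (τ i)) (fun σ _ => by
        simp only [Matrix.smul_apply, Equiv.Perm.permMatrix_apply, smul_eq_mul]
        split_ifs <;> simp [hw σ]) (mem_univ τ)

theorem exists_pos_diag_of_mem_doublyStochastic (hS : S ∈ doublyStochastic R ι) :
    ∃ σ : Equiv.Perm ι, ∀ i, 0 < S i (σ i) := by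
  obtain ⟨w, hw0, hw1, hwS⟩ := exists_eq_sum_perm_of_mem_doublyStochastic hS
  obtain ⟨σ, -, hσ⟩ := exists_lt_of_sum_lt (s := univ) (f := 0) (g := w) (by simp [hw1])
  exact ⟨σ, pos_diag_of_eq_sum_perm hw0 hwS hσ⟩

theorem apply_eq_ite_of_apply_eq_one (hS : S ∈ doublyStochastic R ι) {i k : ι}
    (hik : S i k = 1) (j : ι) : S i j = if k = j then 1 else 0 := by
  have hrest : ∑ j ∈ univ.erase k, S i j = 0 := by
    linarith [add_sum_erase univ (S i) (mem_univ k), sum_row_of_mem_doublyStochastic hS i]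
  split_ifs with hkj
  · exact hkj ▸ hik
  · exact (sum_eq_zero_iff_of_nonneg fun j _ => nonneg_of_mem_doublyStochastic hS).1 hrest j
      (mem_erase.2 ⟨Ne.symm hkj, mem_univ j⟩)

theorem exists_eq_permMatrix_iff_existsUnique_pos_diag (hS : S ∈ doublyStochastic R ι) :
    (∃ σ : Equiv.Perm ι, ∀ i j, S i j = if σ i = j then 1 else 0) ↔
      ∃! σ : Equiv.Perm ι, ∀ i, 0 < S i (σ i) := by
  constructor
  · rintro ⟨σ, hσ⟩
    refine ⟨σ, fun i => by simp [hσ], fun τ hτ => Equiv.ext fun i => ?_⟩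
    by_contra hne
    simpa [hσ, Ne.symm hne] using hτ i
  · rintro ⟨σ, -, huniq⟩
    obtain ⟨w, hw0, hw1, hwS⟩ := exists_eq_sum_perm_of_mem_doublyStochastic hS
    have hw (τ : Equiv.Perm ι) (hτ : τ ≠ σ) : w τ = 0 :=
      (hw0 τ).eq_of_not_lt' fun hpos => hτ (huniq τ (pos_diag_of_eq_sum_perm hw0 hwS hpos))
    have hwσ : w σ = 1 := by rw [← hw1, sum_eq_single σ (fun τ _ => hw τ) (by simp)]
    refine ⟨σ, fun i j => ?_⟩
    rw [← hwS, sum_eq_single σ (fun τ _ hτ => by rw [hw τ hτ, zero_smul]) (by simp), hwσ,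
      one_smul, Equiv.Perm.permMatrix_apply]

theorem sum_sq_eq_card_iff (hS : S ∈ doublyStochastic R ι) :
    ∑ i, ∑ j, S i j ^ 2 = Fintype.card ι ↔
      ∃ σ : Equiv.Perm ι, ∀ i j, S i j = if σ i = j then 1 else 0 := by
  constructor
  · intro hsq
    have hgap (i j : ι) : 0 ≤ S i j - S i j ^ 2 := by
      nlinarith [nonneg_of_mem_doublyStochastic hS (i := i) (j := j),
        le_one_of_mem_doublyStochastic hS (i := i) (j := j)]
    have htot : ∑ i, ∑ j, (S i j - S i j ^ 2) = 0 := by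
      simp [sum_sub_distrib, hsq, sum_row_of_mem_doublyStochastic hS]
    have hidem (i j : ι) : S i j - S i j ^ 2 = 0 :=
      (sum_eq_zero_iff_of_nonneg fun j _ => hgap i j).1
        ((sum_eq_zero_iff_of_nonneg fun i _ => sum_nonneg fun j _ => hgap i j).1 htot i
          (mem_univ i)) j (mem_univ j)
    obtain ⟨σ, hσ⟩ := exists_pos_diag_of_mem_doublyStochastic hS
    refine ⟨σ, fun i j => apply_eq_ite_of_apply_eq_one hS ?_ j⟩
    nlinarith [hidem i (σ i), hσ i]
  · rintro ⟨σ, hσ⟩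
    simp [hσ, ite_pow]

end DoublyStochastic

theorem cooperative_index_eq_one_iff_unique_diagonal_general (n : ℕ) (hn : 0 < n)
    (M : Fin n → Fin n → ℝ)
    (hMnn : ∀ i j, 0 ≤ M i j)
    (S : Fin n → Fin n → ℝ)
    (hSnn : ∀ i j, 0 ≤ S i j)
    (hSrow : ∀ i, (∑ j, S i j) = 1) (hScol : ∀ j, (∑ i, S i j) = 1)
    (hconvL : ∀ i j, Filter.Tendsto (fun k => sinkhornL M k i j) Filter.atTop (nhds (S i j))) :
    ((1 / (n : ℝ)) * (∑ i, ∑ j, (S i j) ^ 2) = 1 ↔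
      ∃! σ : Equiv.Perm (Fin n), ∀ i, 0 < M i (σ i)) ∧
    ((∃ σ : Equiv.Perm (Fin n), ∀ i j, S i j = if σ i = j then 1 else 0) ↔
      ∃! σ : Equiv.Perm (Fin n), ∀ i, 0 < M i (σ i)) := by
  have hS : (S : Matrix (Fin n) (Fin n) ℝ) ∈ doublyStochastic ℝ (Fin n) :=
    mem_doublyStochastic_iff_sum.2 ⟨hSnn, hSrow, hScol⟩
  have hdiag := pos_diag_iff_of_tendsto hMnn hSnn (exists_pos_diag_of_mem_doublyStochastic hS)
    (isDiagonalScaling_sinkhornL M) hconvL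
  have hperm := exists_eq_permMatrix_iff_existsUnique_pos_diag hS
  simp only [hdiag] at hperm
  have hCI : (1 / (n : ℝ)) * (∑ i, ∑ j, (S i j) ^ 2) = 1 ↔ ∑ i, ∑ j, S i j ^ 2 = n := by
    rw [one_div, inv_mul_eq_one₀ (by positivity), eq_comm]
  have hsq := sum_sq_eq_card_iff hS
  rw [Fintype.card_fin] at hsq
  exact ⟨hCI.trans (hsq.trans hperm), hperm⟩

/-- given convergence of the Sinkhorn iterates of `M` to a doubly
stochastic `S`, the Cooperative Index `CI(M) = (1/n) ∑ i j, (S i j)²` equals `1`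
iff `M` has exactly one positive diagonal (equivalently, `S` is a permutation
matrix iff there is a unique positive diagonal of `M`). -/
theorem cooperative_index_eq_one_iff_unique_diagonal (n : ℕ) (hn : 0 < n)
    (M : Fin n → Fin n → ℝ)
    (hMnn : ∀ i j, 0 ≤ M i j)
    (hdiag : ∃ σ : Equiv.Perm (Fin n), ∀ i, 0 < M i (σ i))
    (S : Fin n → Fin n → ℝ)
    (hSnn : ∀ i j, 0 ≤ S i j)
    (hSrow : ∀ i, (∑ j, S i j) = 1) (hScol : ∀ j, (∑ i, S i j) = 1)
    (hconvL : ∀ i j, Filter.Tendsto (fun k => sinkhornL M k i j) Filter.atTop (nhds (S i j)))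
    (hconvT : ∀ i j, Filter.Tendsto (fun k => sinkhornT M k i j) Filter.atTop (nhds (S i j))) :
    ((1 / (n : ℝ)) * (∑ i, ∑ j, (S i j) ^ 2) = 1 ↔
      ∃! σ : Equiv.Perm (Fin n), ∀ i, 0 < M i (σ i)) ∧
    ((∃ σ : Equiv.Perm (Fin n), ∀ i j, S i j = if σ i = j then 1 else 0) ↔
      ∃! σ : Equiv.Perm (Fin n), ∀ i, 0 < M i (σ i)) :=
  cooperative_index_eq_one_iff_unique_diagonal_general n hn M hMnn S hSnn hSrow hScol hconvL
end

section
/- Let n be a positive integer and M : Fin n → Fin n → ℝ a nonnegative matrix. Then M has exactly one positive diagonal (there is a unique permutation σ of Fin n with M i (σ i) > 0 for all i) if and only if M is a permutation of an upper-triangular matrix, i.e., there exist permutations σ, τ of Fin n such that the matrix B defined by B i j = M (σ i) (τ j) satisfies B i i > 0 for all i and B i j = 0 whenever i > j. -/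
/-!
If `σ₀` is the only positive diagonal, then the digraph with an edge `i → j` whenever `i ≠ j`
and `M i (σ₀ j) > 0` is acyclic: rerouting `σ₀` along a cycle would give a second positive
diagonal. Ordering the rows along a topological sort of this digraph, and the columns by
`σ₀`, makes the matrix upper triangular. Conversely, if `M (σ i) (τ j)` is upper triangular,
then any positive diagonal `π` yields the permutation `ρ = τ⁻¹ π σ` with `i ≤ ρ i` for all
`i`, and such a permutation of a finite order is the identity.
-/

open Function Relation

theorem Equiv.Perm.eq_one_of_forall_le_apply {α : Type*} [PartialOrder α] [Finite α]
    {ρ : Equiv.Perm α} (h : ∀ a, a ≤ ρ a) : ρ = 1 := by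
  have hpow : ∀ k : ℕ, ∀ a, a ≤ (ρ ^ k) a := by
    intro k
    induction k with
    | zero => exact fun a => le_rfl
    | succ k ih => exact fun a => (ih a).trans (by rw [pow_succ', Perm.mul_apply]; exact h _)
  ext a
  refine le_antisymm ?_ (h a)
  have := hpow (orderOf ρ - 1) (ρ a)
  rwa [← Perm.mul_apply, ← pow_succ, Nat.sub_add_cancel (orderOf_pos ρ),
    pow_orderOf_eq_one] at this

theorem Function.exists_iterate_mem_periodicPts {α : Type*} [Finite α] (f : α → α) (x : α) :
    ∃ n, f^[n] x ∈ periodicPts f := by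
  obtain ⟨m, n, hmn, heq⟩ := Finite.exists_ne_map_eq_of_infinite (f^[·] x)
  wlog hlt : m < n generalizing m n
  · exact this n m hmn.symm heq.symm (hmn.symm.lt_of_le (not_lt.mp hlt))
  refine ⟨m, mk_mem_periodicPts (Nat.sub_pos_of_lt hlt) ?_⟩
  rw [IsPeriodicPt, IsFixedPt, ← iterate_add_apply, Nat.sub_add_cancel hlt.le]
  exact heq.symm

theorem Function.exists_perm_eqOn_periodicPts {α : Type*} (f : α → α) :
    ∃ π : Equiv.Perm α, (∀ x ∈ periodicPts f, π x = f x) ∧ ∀ x ∉ periodicPts f, π x = x := by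
  classical
  refine ⟨Equiv.Perm.ofSubtype ((bijOn_periodicPts f).equiv f), fun x hx => ?_,
    fun x hx => Equiv.Perm.ofSubtype_apply_of_not_mem _ hx⟩
  rw [Equiv.Perm.ofSubtype_apply_of_mem _ hx]
  rfl

theorem Relation.exists_perm_ne_one_of_transGen {α : Type*} [Finite α] {r : α → α → Prop}
    (hr : ∀ x, ¬r x x) {a : α} (ha : TransGen r a a) :
    ∃ π : Equiv.Perm α, π ≠ 1 ∧ ∀ x, π x = x ∨ r x (π x) := by
  classical
  have hstep : ∀ x, TransGen r x a → ∃ y, r x y ∧ TransGen r y a := by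
    intro x hx
    obtain ⟨y, hxy, hya⟩ := TransGen.head'_iff.mp hx
    rcases reflTransGen_iff_eq_or_transGen.mp hya with rfl | hya
    · exact ⟨_, hxy, ha⟩
    · exact ⟨y, hxy, hya⟩
  choose! g hrg hg using hstep
  -- `f` follows an edge from every vertex that reaches `a`; on the periodic points of `f` these
  -- edges form disjoint cycles, and a periodic point exists among the iterates of `a`.
  set f : α → α := fun x => if TransGen r x a then g x else x with hf_def
  have hf : Set.MapsTo f {x | TransGen r x a} {x | TransGen r x a} := fun x hx => by
    simpa [hf_def, show TransGen r x a from hx] using hg x hx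
  obtain ⟨π, hπf, hπid⟩ := exists_perm_eqOn_periodicPts f
  obtain ⟨k, hk⟩ := exists_iterate_mem_periodicPts f a
  have hka : TransGen r (f^[k] a) a := hf.iterate k ha
  have hπ_eq_g : ∀ x ∈ periodicPts f, TransGen r x a → π x = g x := fun x hx hxa => by
    simp [hπf x hx, hf_def, hxa]
  refine ⟨π, fun h1 => hr (f^[k] a) ?_, fun x => ?_⟩
  · simpa [← hπ_eq_g _ hk hka, h1] using hrg _ hka
  · by_cases hx : x ∈ periodicPts f
    · by_cases hxa : TransGen r x a
      · exact Or.inr (hπ_eq_g x hx hxa ▸ hrg x hxa)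
      · exact Or.inl (by simp [hπf x hx, hf_def, hxa])
    · exact Or.inl (hπid x hx)

theorem Relation.exists_equiv_lt_of_acyclic {α β : Type*} [Fintype α] [Fintype β]
    [LinearOrder β] {r : α → α → Prop} (hr : ∀ a, ¬TransGen r a a)
    (hcard : Fintype.card β = Fintype.card α) :
    ∃ e : β ≃ α, ∀ i j, r (e i) (e j) → i < j := by
  have : IsStrictOrder α (TransGen r) := { irrefl := hr }
  let := partialOrderOfSO (TransGen r)
  let : Fintype (LinearExtension α) := inferInstanceAs (Fintype α)
  have hext : ∀ a b : α, r a b → toLinearExtension a < toLinearExtension b := fun a b hab =>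
    (toLinearExtension.monotone (Or.inr (.single hab))).lt_of_ne
      fun h => hr a (.single (by rwa [show a = b from h] at hab ⊢))
  let e : β ≃o LinearExtension α :=
    (Fintype.orderIsoFinOfCardEq β rfl).symm.trans (Fintype.orderIsoFinOfCardEq _ hcard.symm)
  exact ⟨e.toEquiv, fun i j hij => e.lt_iff_lt.mp (hext _ _ hij)⟩

section PositiveDiagonal

variable {α R : Type*} [Zero R]

def IsPositiveDiagonal [LT R] (M : α → α → R) (σ : Equiv.Perm α) : Prop :=
  ∀ i, 0 < M i (σ i)

theorem existsUnique_isPositiveDiagonal_of_triangular [Finite α] [LinearOrder α] [Preorder R]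
    (M : α → α → R) (σ τ : Equiv.Perm α) (hdiag : ∀ i, 0 < M (σ i) (τ i))
    (hzero : ∀ i j, j < i → M (σ i) (τ j) = 0) :
    ∃! π, IsPositiveDiagonal M π := by
  refine ⟨σ.symm.trans τ, fun i => by simpa using hdiag (σ.symm i), fun π hπ => ?_⟩
  have hle : ∀ i, i ≤ σ.trans (π.trans τ.symm) i := fun i => not_lt.mp fun hlt => by
    simpa using (hπ (σ i)).ne' (by simpa using hzero i _ hlt)
  have hρ := Equiv.Perm.eq_one_of_forall_le_apply hle
  ext i
  simpa using congrArg τ (DFunLike.congr_fun hρ (σ.symm i))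

theorem IsPositiveDiagonal.not_transGen_of_unique [Finite α] [Preorder R] {M : α → α → R}
    {σ : Equiv.Perm α} (hσ : IsPositiveDiagonal M σ)
    (huniq : ∀ π, IsPositiveDiagonal M π → π = σ) (a : α) :
    ¬TransGen (fun i j => i ≠ j ∧ 0 < M i (σ j)) a a := by
  intro ha
  obtain ⟨π, hπ1, hπ⟩ := exists_perm_ne_one_of_transGen (fun x hx => hx.1 rfl) ha
  have hπσ : IsPositiveDiagonal M (σ * π) := fun i => by
    rcases hπ i with h | h
    · simpa [h] using hσ i
    · exact h.2
  exact hπ1 (mul_eq_left.mp (huniq _ hπσ))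

theorem exists_triangular_of_existsUnique_isPositiveDiagonal [Fintype α] [LinearOrder α]
    [PartialOrder R] (M : α → α → R) (hM : ∀ i j, 0 ≤ M i j)
    (h : ∃! σ, IsPositiveDiagonal M σ) :
    ∃ σ τ : Equiv.Perm α,
      (∀ i, 0 < M (σ i) (τ i)) ∧ ∀ i j, j < i → M (σ i) (τ j) = 0 := by
  obtain ⟨σ₀, hσ₀, huniq⟩ := h
  obtain ⟨ρ, hρ⟩ := exists_equiv_lt_of_acyclic (hσ₀.not_transGen_of_unique huniq) rfl
  refine ⟨ρ, ρ.trans σ₀, fun i => hσ₀ (ρ i), fun i j hji => ?_⟩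
  by_contra hne
  exact (hρ i j ⟨ρ.injective.ne hji.ne', (hM _ _).lt_of_ne' hne⟩).asymm hji

end PositiveDiagonal

theorem unique_positive_diagonal_iff_triangular_general (n : ℕ)
    (M : Fin n → Fin n → ℝ)
    (hMnn : ∀ i j, 0 ≤ M i j) :
    (∃! σ : Equiv.Perm (Fin n), ∀ i, 0 < M i (σ i)) ↔
      ∃ σ τ : Equiv.Perm (Fin n),
        (∀ i, 0 < M (σ i) (τ i)) ∧
        ∀ i j : Fin n, j < i → M (σ i) (τ j) = 0 :=
  ⟨exists_triangular_of_existsUnique_isPositiveDiagonal M hMnn,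
    fun ⟨σ, τ, hdiag, hzero⟩ => existsUnique_isPositiveDiagonal_of_triangular M σ τ hdiag hzero⟩

/-- a nonnegative matrix `M` has exactly one positive diagonal iff
`M` is a permutation of an upper-triangular matrix (with positive main
diagonal). -/
theorem unique_positive_diagonal_iff_triangular (n : ℕ) (hn : 0 < n)
    (M : Fin n → Fin n → ℝ)
    (hMnn : ∀ i j, 0 ≤ M i j) :
    (∃! σ : Equiv.Perm (Fin n), ∀ i, 0 < M i (σ i)) ↔
      ∃ σ τ : Equiv.Perm (Fin n),
        (∀ i, 0 < M (σ i) (τ i)) ∧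
        ∀ i j : Fin n, j < i → M (σ i) (τ j) = 0 :=
  unique_positive_diagonal_iff_triangular_general n M hMnn
end

section
/- Let n be a positive integer and A : Fin (n+1) → Fin (n+1) → ℝ a matrix with exactly one nonzero diagonal, witnessed by the unique permutation σ with A i (σ i) ≠ 0 for all i. Suppose A i₀ j₀ ≠ 0 for some indices i₀, j₀, and let A' : Fin n → Fin n → ℝ be the submatrix of A obtained by deleting row i₀ and column j₀ (A' a b = A (i₀.succAbove a) (j₀.succAbove b)). Then A' has at most one nonzero diagonal, i.e., there is at most one permutation π of Fin n with A' a (π a) ≠ 0 for all a; moreover, if j₀ = σ i₀, then A' has exactly one nonzero diagonal. -/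
/-!
A nonzero diagonal `π` of the submatrix, completed by the entry `(i₀, j₀)`, is a nonzero diagonal
of `A`, hence equals `σ`; so `π` is determined by `σ`. If `σ i₀ = j₀`, then `σ` is itself such a
completion of some `π`, and that `π` is a nonzero diagonal of the submatrix.
-/

namespace Equiv.Perm

variable {n : ℕ} (i₀ j₀ : Fin (n + 1))

def extendSuccAbove (π : Perm (Fin n)) : Perm (Fin (n + 1)) :=
  (finSuccEquiv' i₀).trans ((optionCongr π).trans (finSuccEquiv' j₀).symm)

@[simp]
lemma extendSuccAbove_apply_self (π : Perm (Fin n)) : extendSuccAbove i₀ j₀ π i₀ = j₀ := by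
  simp [extendSuccAbove]

@[simp]
lemma extendSuccAbove_apply_succAbove (π : Perm (Fin n)) (a : Fin n) :
    extendSuccAbove i₀ j₀ π (i₀.succAbove a) = j₀.succAbove (π a) := by
  simp [extendSuccAbove]

lemma extendSuccAbove_injective : Function.Injective (extendSuccAbove i₀ j₀ (n := n)) :=
  fun π₁ π₂ h => Equiv.ext fun a => j₀.succAbove_right_injective <| by
    rw [← extendSuccAbove_apply_succAbove, h, extendSuccAbove_apply_succAbove]

lemma exists_extendSuccAbove_eq {σ : Perm (Fin (n + 1))} (h : σ i₀ = j₀) :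
    ∃ π, extendSuccAbove i₀ j₀ π = σ := by
  set e : Perm (Option (Fin n)) := (finSuccEquiv' i₀).symm.trans (σ.trans (finSuccEquiv' j₀))
  have he : e none = none := by simp [e, h]
  -- `e` fixes `none`, so the swap in `map_equiv_removeNone` is the identity.
  refine ⟨removeNone e, Equiv.ext fun i => ?_⟩
  simp [extendSuccAbove, map_equiv_removeNone, he, e]

end Equiv.Perm

open Equiv.Perm

lemma forall_extendSuccAbove_ne_zero_iff {R : Type*} [Zero R] {n : ℕ}
    (A : Fin (n + 1) → Fin (n + 1) → R) (i₀ j₀ : Fin (n + 1)) (π : Equiv.Perm (Fin n)) :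
    (∀ i, A i (extendSuccAbove i₀ j₀ π i) ≠ 0) ↔
      A i₀ j₀ ≠ 0 ∧ ∀ a, A (i₀.succAbove a) (j₀.succAbove (π a)) ≠ 0 := by
  simp only [i₀.forall_iff_succAbove, extendSuccAbove_apply_self, extendSuccAbove_apply_succAbove]

theorem submatrix_at_most_one_nonzero_diagonal_general (n : ℕ)
    (A : Fin (n + 1) → Fin (n + 1) → ℝ)
    (σ : Equiv.Perm (Fin (n + 1)))
    (hσ : ∀ i, A i (σ i) ≠ 0)
    (huniq : ∀ σ' : Equiv.Perm (Fin (n + 1)), (∀ i, A i (σ' i) ≠ 0) → σ' = σ)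
    (i₀ j₀ : Fin (n + 1)) (hA : A i₀ j₀ ≠ 0) :
    (∀ π₁ π₂ : Equiv.Perm (Fin n),
        (∀ a, A (i₀.succAbove a) (j₀.succAbove (π₁ a)) ≠ 0) →
        (∀ a, A (i₀.succAbove a) (j₀.succAbove (π₂ a)) ≠ 0) → π₁ = π₂) ∧
    (j₀ = σ i₀ →
      ∃! π : Equiv.Perm (Fin n), ∀ a, A (i₀.succAbove a) (j₀.succAbove (π a)) ≠ 0) := by
  have extend_eq : ∀ π : Equiv.Perm (Fin n),
      (∀ a, A (i₀.succAbove a) (j₀.succAbove (π a)) ≠ 0) → extendSuccAbove i₀ j₀ π = σ :=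
    fun π hπ => huniq _ ((forall_extendSuccAbove_ne_zero_iff A i₀ j₀ π).2 ⟨hA, hπ⟩)
  refine ⟨fun π₁ π₂ h₁ h₂ => extendSuccAbove_injective i₀ j₀
    ((extend_eq π₁ h₁).trans (extend_eq π₂ h₂).symm), fun hj => ?_⟩
  obtain ⟨π, hπ⟩ := exists_extendSuccAbove_eq i₀ j₀ hj.symm
  have hdiag := ((forall_extendSuccAbove_ne_zero_iff A i₀ j₀ π).1 (hπ ▸ hσ)).2
  exact ⟨π, hdiag, fun π' hπ' =>
    extendSuccAbove_injective i₀ j₀ ((extend_eq π' hπ').trans hπ.symm)⟩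

/-- Observation 1: if `A` has exactly one nonzero diagonal `σ`
and `A i₀ j₀ ≠ 0`, then the submatrix obtained by deleting row `i₀` and column
`j₀` has at most one nonzero diagonal; moreover it has exactly one nonzero
diagonal when `j₀ = σ i₀`. -/
theorem submatrix_at_most_one_nonzero_diagonal (n : ℕ) (hn : 0 < n)
    (A : Fin (n + 1) → Fin (n + 1) → ℝ)
    (σ : Equiv.Perm (Fin (n + 1)))
    (hσ : ∀ i, A i (σ i) ≠ 0)
    (huniq : ∀ σ' : Equiv.Perm (Fin (n + 1)), (∀ i, A i (σ' i) ≠ 0) → σ' = σ)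
    (i₀ j₀ : Fin (n + 1)) (hA : A i₀ j₀ ≠ 0) :
    (∀ π₁ π₂ : Equiv.Perm (Fin n),
        (∀ a, A (i₀.succAbove a) (j₀.succAbove (π₁ a)) ≠ 0) →
        (∀ a, A (i₀.succAbove a) (j₀.succAbove (π₂ a)) ≠ 0) → π₁ = π₂) ∧
    (j₀ = σ i₀ →
      ∃! π : Equiv.Perm (Fin n), ∀ a, A (i₀.succAbove a) (j₀.succAbove (π a)) ≠ 0) :=
  submatrix_at_most_one_nonzero_diagonal_general n A σ hσ huniq i₀ j₀ hA
end

section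
/- Let n be a positive integer and A : Fin n → Fin n → ℝ a matrix with exactly one nonzero diagonal (there is a unique permutation σ of Fin n with A i (σ i) ≠ 0 for all i). If some row of A has exactly one nonzero element, or some column of A has exactly one nonzero element, then A is a permutation of an upper-triangular matrix: there exist permutations σ', τ of Fin n such that B i j = A (σ' i) (τ j) satisfies B i i ≠ 0 for all i and B i j = 0 whenever i > j. -/
/-!
Permute the columns so that the unique nonzero diagonal becomes the main one, and draw an edge
`i → j` for every nonzero off-diagonal entry. A cycle of this digraph could be rotated into a
second nonzero diagonal, so the digraph is acyclic, and ordering the indices topologically makes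
the matrix upper triangular.
-/

open Finset Equiv Function Relation

namespace Function

variable {α : Type*}

theorem exists_iterate_mem_periodicPts_s15 [Finite α] (f : α → α) (x : α) :
    ∃ m, f^[m] x ∈ periodicPts f := by
  obtain ⟨m, n, hmn, heq⟩ := Finite.exists_ne_map_eq_of_infinite (f^[·] x)
  wlog hlt : m < n generalizing m n
  · exact this n m hmn.symm heq.symm (by omega)
  refine ⟨m, mk_mem_periodicPts (Nat.sub_pos_of_lt hlt) ?_⟩
  rw [IsPeriodicPt, IsFixedPt, ← iterate_add_apply, Nat.sub_add_cancel hlt.le]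
  exact heq.symm

noncomputable def periodicPtsPerm (f : α → α) : Perm α :=
  open Classical in Perm.ofSubtype ((bijOn_periodicPts f).equiv f)

theorem periodicPtsPerm_apply_of_mem {f : α → α} {x : α} (hx : x ∈ periodicPts f) :
    periodicPtsPerm f x = f x := by
  classical
  rw [periodicPtsPerm, Perm.ofSubtype_apply_of_mem _ hx]
  rfl

theorem periodicPtsPerm_apply_of_notMem {f : α → α} {x : α} (hx : x ∉ periodicPts f) :
    periodicPtsPerm f x = x := by
  classical
  exact Perm.ofSubtype_apply_of_not_mem _ hx

end Function

section Relation

variable {α : Type*} {r : α → α → Prop}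

theorem exists_perm_rel_of_forall_exists_rel [Finite α] {s : Set α} (hs : s.Nonempty)
    (h : ∀ y ∈ s, ∃ z ∈ s, r y z) :
    ∃ π : Perm α, (∃ x, r x (π x)) ∧ ∀ i, π i = i ∨ r i (π i) := by
  classical
  -- An `r`-successor map on `s`, extended by the identity, permutes its periodic points, and the
  -- orbit of any point of `s` stays in `s` and reaches such a point.
  choose! g hgs hgr using h
  set f : α → α := fun y => if y ∈ s then g y else y with hf_def
  have hf_mapsTo : Set.MapsTo f s s := fun y hy => by simpa [hf_def, hy] using hgs y hy
  have hf_rel : ∀ y ∈ s, r y (f y) := fun y hy => by simpa [hf_def, hy] using hgr y hy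
  have hf : ∀ y, f y = y ∨ r y (f y) := fun y => by
    by_cases hy : y ∈ s
    · exact .inr (hf_rel y hy)
    · exact .inl (if_neg hy)
  obtain ⟨a, ha⟩ := hs
  obtain ⟨m, hm⟩ := exists_iterate_mem_periodicPts_s15 f a
  refine ⟨periodicPtsPerm f, ⟨f^[m] a, ?_⟩, fun i => ?_⟩
  · rw [periodicPtsPerm_apply_of_mem hm]
    exact hf_rel _ (hf_mapsTo.iterate m ha)
  · by_cases hi : i ∈ periodicPts f
    · rw [periodicPtsPerm_apply_of_mem hi]
      exact hf i
    · exact .inl (periodicPtsPerm_apply_of_notMem hi)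

theorem exists_perm_rel_of_transGen_self [Finite α] {a : α} (ha : TransGen r a a) :
    ∃ π : Perm α, (∃ x, r x (π x)) ∧ ∀ i, π i = i ∨ r i (π i) := by
  refine exists_perm_rel_of_forall_exists_rel (s := {y | TransGen r y a}) ⟨a, ha⟩ ?_
  intro y hy
  obtain ⟨z, hyz, hza⟩ := TransGen.head'_iff.mp hy
  exact ⟨z, TransGen.trans_right hza ha, hyz⟩

theorem exists_rank_of_acyclic [Fintype α] (h : ∀ a, ¬TransGen r a a) :
    ∃ f : α → ℕ, ∀ x y, r x y → f x < f y := by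
  classical
  refine ⟨fun y => #{z | TransGen r z y}, fun x y hxy => card_lt_card ?_⟩
  rw [ssubset_iff_of_subset]
  · exact ⟨x, by simpa using TransGen.single hxy, by simpa using h x⟩
  · intro z hz
    simp only [mem_filter, mem_univ, true_and] at hz ⊢
    exact hz.tail hxy

theorem exists_perm_lt_of_acyclic {n : ℕ} {r : Fin n → Fin n → Prop}
    (h : ∀ a, ¬TransGen r a a) : ∃ ρ : Perm (Fin n), ∀ i j, r (ρ i) (ρ j) → i < j := by
  obtain ⟨f, hf⟩ := exists_rank_of_acyclic h
  exact ⟨Tuple.sort f, fun i j hij =>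
    lt_of_not_ge fun hji => (hf _ _ hij).not_ge (Tuple.monotone_sort f hji)⟩

end Relation

theorem acyclic_of_unique_diagonal {ι R : Type*} [Finite ι] [Zero R] {A : ι → ι → R}
    {σ : Perm ι} (hσ : ∀ i, A i (σ i) ≠ 0)
    (huniq : ∀ π : Perm ι, (∀ i, A i (π i) ≠ 0) → π = σ) :
    ∀ a, ¬TransGen (fun i j => i ≠ j ∧ A i (σ j) ≠ 0) a a := by
  intro a ha
  obtain ⟨π, ⟨x, hx_moved, -⟩, hπ⟩ := exists_perm_rel_of_transGen_self ha
  have hdiag : ∀ i, A i ((π.trans σ) i) ≠ 0 := fun i => by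
    rcases hπ i with h | h
    · simpa [h] using hσ i
    · exact h.2
  have hπσ : σ (π x) = σ x := DFunLike.congr_fun (huniq _ hdiag) x
  exact hx_moved (σ.injective hπσ).symm

theorem unique_diagonal_single_nonzero_row_or_col_general (n : ℕ)
    (A : Fin n → Fin n → ℝ)
    (huniq : ∃! σ : Equiv.Perm (Fin n), ∀ i, A i (σ i) ≠ 0) :
    ∃ σ' τ : Equiv.Perm (Fin n),
      (∀ i, A (σ' i) (τ i) ≠ 0) ∧
      ∀ i j : Fin n, j < i → A (σ' i) (τ j) = 0 := by
  obtain ⟨σ, hσ, hσ_uniq⟩ := huniq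
  obtain ⟨ρ, hρ⟩ := exists_perm_lt_of_acyclic (acyclic_of_unique_diagonal hσ hσ_uniq)
  refine ⟨ρ, ρ.trans σ, fun i => hσ (ρ i), fun i j hji => ?_⟩
  by_contra hne
  exact (hρ i j ⟨ρ.injective.ne hji.ne', hne⟩).not_gt hji

/-- Observation 2: if `A` has exactly one nonzero diagonal and
some row or some column of `A` has exactly one nonzero element, then `A` is a
permutation of an upper-triangular matrix. -/
theorem unique_diagonal_single_nonzero_row_or_col (n : ℕ) (hn : 0 < n)
    (A : Fin n → Fin n → ℝ)
    (huniq : ∃! σ : Equiv.Perm (Fin n), ∀ i, A i (σ i) ≠ 0)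
    (hrc : (∃ i, ∃! j, A i j ≠ 0) ∨ (∃ j, ∃! i, A i j ≠ 0)) :
    ∃ σ' τ : Equiv.Perm (Fin n),
      (∀ i, A (σ' i) (τ i) ≠ 0) ∧
      ∀ i j : Fin n, j < i → A (σ' i) (τ j) = 0 :=
  unique_diagonal_single_nonzero_row_or_col_general n A huniq
end

section
/- Let n be a positive integer and A : Fin n → Fin n → ℝ a matrix whose main diagonal is its only nonzero diagonal: A i i ≠ 0 for all i, and the identity is the unique permutation σ of Fin n with A i (σ i) ≠ 0 for all i. Then for every k ≥ 2 and every injective function t : Fin k → Fin n, the cyclic product vanishes: ∏_{i : Fin k} A (t i) (t (i + 1)) = 0, where i + 1 is taken modulo k (so the last factor is A (t (k-1)) (t 0)). -/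
open Finset

/-!
Suppose some cyclic product `A (t 0) (t 1) ⋯ A (t (k+1)) (t 0)` over distinct indices is nonzero.
Rotating the indices `t i` along the cycle and fixing every other index gives a permutation
whose diagonal is nonzero: on the cycle by the nonzero factors, elsewhere by the nonzero main
diagonal. It acts on the indices `t i` as a `(k+2)`-cycle, so it is not the identity.
-/

namespace Equiv.Perm

variable {α β : Type*} [Fintype α] [DecidableEq β]

theorem eq_one_of_viaFintypeEmbedding_eq_one {e : Perm α} {f : α ↪ β}
    (h : e.viaFintypeEmbedding f = 1) : e = 1 := by
  ext a
  apply f.injective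
  rw [← viaFintypeEmbedding_apply_image, h, one_apply, one_apply]

theorem viaFintypeEmbedding_rel_of_refl {r : β → β → Prop} (hr : ∀ b, r b b)
    (e : Perm α) (f : α ↪ β) (he : ∀ a, r (f a) (f (e a))) (b : β) :
    r b (e.viaFintypeEmbedding f b) := by
  by_cases hb : b ∈ Set.range f
  · obtain ⟨a, rfl⟩ := hb
    rw [viaFintypeEmbedding_apply_image]
    exact he a
  · rw [viaFintypeEmbedding_apply_notMem_range _ _ hb]
    exact hr b

end Equiv.Perm

theorem cyclic_products_vanish_general (n : ℕ)
    (A : Fin n → Fin n → ℝ)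
    (hdiag : ∀ i, A i i ≠ 0)
    (huniq : ∀ σ : Equiv.Perm (Fin n), (∀ i, A i (σ i) ≠ 0) → σ = 1) :
    ∀ (k : ℕ) (t : Fin (k + 2) → Fin n), Function.Injective t →
      (∏ i : Fin (k + 2), A (t i) (t (i + 1))) = 0 := by
  intro k t ht
  by_contra hprod
  let f : Fin (k + 2) ↪ Fin n := ⟨t, ht⟩
  have hcycle : ∀ i, A (f i) (f (finRotate (k + 2) i)) ≠ 0 := fun i => by
    rw [finRotate_apply]
    exact prod_ne_zero_iff.mp hprod i (mem_univ i)
  have hσ := huniq _ <|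
    Equiv.Perm.viaFintypeEmbedding_rel_of_refl (r := fun i j => A i j ≠ 0) hdiag _ f hcycle
  exact isCycle_finRotate.ne_one (Equiv.Perm.eq_one_of_viaFintypeEmbedding_eq_one hσ)

/-- Observation 3: if the main diagonal of `A` is its only
nonzero diagonal, then every cyclic product over `k ≥ 2` distinct indices
vanishes: for any injective `t : Fin (k+2) → Fin n`,
`∏ i, A (t i) (t (i + 1)) = 0` (indices of `Fin (k+2)` taken mod `k+2`, so the
last factor is `A (t (k+1)) (t 0)`). -/
theorem cyclic_products_vanish (n : ℕ) (hn : 0 < n)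
    (A : Fin n → Fin n → ℝ)
    (hdiag : ∀ i, A i i ≠ 0)
    (huniq : ∀ σ : Equiv.Perm (Fin n), (∀ i, A i (σ i) ≠ 0) → σ = 1) :
    ∀ (k : ℕ) (t : Fin (k + 2) → Fin n), Function.Injective t →
      (∏ i : Fin (k + 2), A (t i) (t (i + 1))) = 0 :=
  cyclic_products_vanish_general n A hdiag huniq
end

section
/- Let N be a positive integer and C : Fin N → Fin N → ℝ a matrix with every entry equal to 0 or 1 that is a permutation of an upper-triangular matrix: there exist permutations σ, τ of Fin N such that B i j = C (σ i) (τ j) satisfies B i i = 1 for all i and B i j = 0 whenever i > j. Then C has a positive diagonal, and if the Sinkhorn iterates of C converge entrywise to a doubly stochastic matrix S, then S is a permutation matrix (equivalently, CI(C) = (1/N) ∑_{i,j} (S i j)² = 1). -/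
/-! Row and column normalization never turn a zero entry into a nonzero one, so the Sinkhorn
limit `S` vanishes wherever `C` does. After reindexing rows by `σ` and columns by `τ`, `S` is
therefore an upper-triangular doubly stochastic matrix, and such a matrix is the identity. -/

open Finset

lemma sinkhornL_eq_zero {n : ℕ} (M : Fin n → Fin n → ℝ) {i j : Fin n} (h : M i j = 0) :
    ∀ k, sinkhornL M k i j = 0
  | 0 => by simp [sinkhornL, rowNorm, h]
  | k + 1 => by simp [sinkhornL, rowNorm, colNorm, sinkhornL_eq_zero M h k]

lemma eq_zero_of_tendsto_sinkhornL {n : ℕ} {M : Fin n → Fin n → ℝ} {i j : Fin n} {s : ℝ}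
    (h : M i j = 0) (hlim : Filter.Tendsto (fun k => sinkhornL M k i j) Filter.atTop (nhds s)) :
    s = 0 :=
  tendsto_nhds_unique hlim (by simp only [sinkhornL_eq_zero M h]; exact tendsto_const_nhds)

lemma eq_zero_of_sum_eq_one_of_apply_eq_one {ι : Type*} [Fintype ι] {f : ι → ℝ}
    (hf : ∀ k, 0 ≤ f k) (hsum : ∑ k, f k = 1) {i j : ι} (hi : f i = 1) (hji : j ≠ i) :
    f j = 0 := by
  classical
  have hpair : f j + f i ≤ ∑ k, f k := by
    rw [← sum_pair hji]
    exact sum_le_sum_of_subset_of_nonneg (subset_univ _) fun k _ _ => hf k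
  linarith [hf j]

section UpperTriangular

variable {ι : Type*} [Fintype ι] [LinearOrder ι] {B : ι → ι → ℝ}
  (hnn : ∀ i j, 0 ≤ B i j) (hrow : ∀ i, ∑ j, B i j = 1) (hcol : ∀ j, ∑ i, B i j = 1)
  (htri : ∀ i j, j < i → B i j = 0)
include hnn hrow hcol htri

/-- Induction along the order: once the rows above `i` are unit vectors on the diagonal,
column `i` has its only nonzero entry at `(i, i)`. -/
theorem diag_eq_one_of_doublyStochastic_of_upperTriangular (i : ι) : B i i = 1 := by
  induction i using WellFoundedLT.induction with
  | _ i ih =>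
    have habove : ∀ m < i, B m i = 0 := fun m hm =>
      eq_zero_of_sum_eq_one_of_apply_eq_one (hnn m) (hrow m) (ih m hm) hm.ne'
    have hcol_i : ∑ m, B m i = B i i :=
      sum_eq_single i (fun m _ hmi => (lt_or_gt_of_ne hmi).elim (habove m) (htri m i))
        (by simp)
    rw [← hcol_i, hcol i]

theorem eq_ite_of_doublyStochastic_of_upperTriangular (i j : ι) :
    B i j = if i = j then 1 else 0 := by
  have hdiag := diag_eq_one_of_doublyStochastic_of_upperTriangular hnn hrow hcol htri
  split_ifs with hij
  · exact hij ▸ hdiag i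
  · exact eq_zero_of_sum_eq_one_of_apply_eq_one (hnn i) (hrow i) (hdiag i) (Ne.symm hij)

end UpperTriangular

lemma sum_sq_eq_card_of_eq_permMatrix {ι : Type*} [Fintype ι] [DecidableEq ι] {S : ι → ι → ℝ}
    {ρ : Equiv.Perm ι} (hS : ∀ i j, S i j = if ρ i = j then 1 else 0) :
    ∑ i, ∑ j, S i j ^ 2 = Fintype.card ι := by
  simp [hS]

theorem triangular_consistency_CI_eq_one_general (N : ℕ) (hN : 0 < N)
    (C : Fin N → Fin N → ℝ)
    (σ τ : Equiv.Perm (Fin N))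
    (hdiag : ∀ i, C (σ i) (τ i) = 1)
    (htri : ∀ i j : Fin N, j < i → C (σ i) (τ j) = 0) :
    (∃ ρ : Equiv.Perm (Fin N), ∀ i, 0 < C i (ρ i)) ∧
    ∀ S : Fin N → Fin N → ℝ,
      (∀ i j, 0 ≤ S i j) → (∀ i, (∑ j, S i j) = 1) → (∀ j, (∑ i, S i j) = 1) →
      (∀ i j, Filter.Tendsto (fun k => sinkhornL C k i j) Filter.atTop (nhds (S i j))) →
      (∀ i j, Filter.Tendsto (fun k => sinkhornT C k i j) Filter.atTop (nhds (S i j))) →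
      (∃ ρ : Equiv.Perm (Fin N), ∀ i j, S i j = if ρ i = j then 1 else 0) ∧
        (1 / (N : ℝ)) * (∑ i, ∑ j, (S i j) ^ 2) = 1 := by
  let ρ : Equiv.Perm (Fin N) := σ.symm.trans τ
  refine ⟨⟨ρ, fun i => ?_⟩, fun S hnn hrow hcol hL _ => ?_⟩
  · simp [ρ, show C i (τ (σ.symm i)) = 1 by simpa using hdiag (σ.symm i)]
  have hB := eq_ite_of_doublyStochastic_of_upperTriangular (B := fun i j => S (σ i) (τ j))
    (fun _ _ => hnn _ _) (fun i => (Equiv.sum_comp τ _).trans (hrow _))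
    (fun j => (Equiv.sum_comp σ (fun i => S i (τ j))).trans (hcol _))
    (fun i j hji => eq_zero_of_tendsto_sinkhornL (htri i j hji) (hL _ _))
  have hS : ∀ i j, S i j = if ρ i = j then 1 else 0 := fun i j => by
    convert hB (σ.symm i) (τ.symm j) using 2 <;> simp [ρ, Equiv.eq_symm_apply]
  refine ⟨⟨ρ, hS⟩, ?_⟩
  rw [sum_sq_eq_card_of_eq_permMatrix hS, Fintype.card_fin]
  field_simp

/-- a 0/1 consistency matrix `C` that is a permutation of an
upper-triangular matrix (with ones on the main diagonal) has a positive
diagonal, and if its Sinkhorn iterates converge entrywise to a doubly stochastic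
matrix `S`, then `S` is a permutation matrix; equivalently `CI(C) = 1`. -/
theorem triangular_consistency_CI_eq_one (N : ℕ) (hN : 0 < N)
    (C : Fin N → Fin N → ℝ)
    (hC : ∀ i j, C i j = 0 ∨ C i j = 1)
    (σ τ : Equiv.Perm (Fin N))
    (hdiag : ∀ i, C (σ i) (τ i) = 1)
    (htri : ∀ i j : Fin N, j < i → C (σ i) (τ j) = 0) :
    (∃ ρ : Equiv.Perm (Fin N), ∀ i, 0 < C i (ρ i)) ∧
    ∀ S : Fin N → Fin N → ℝ,
      (∀ i j, 0 ≤ S i j) → (∀ i, (∑ j, S i j) = 1) → (∀ j, (∑ i, S i j) = 1) →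
      (∀ i j, Filter.Tendsto (fun k => sinkhornL C k i j) Filter.atTop (nhds (S i j))) →
      (∀ i j, Filter.Tendsto (fun k => sinkhornT C k i j) Filter.atTop (nhds (S i j))) →
      (∃ ρ : Equiv.Perm (Fin N), ∀ i j, S i j = if ρ i = j then 1 else 0) ∧
        (1 / (N : ℝ)) * (∑ i, ∑ j, (S i j) ^ 2) = 1 :=
  triangular_consistency_CI_eq_one_general N hN C σ τ hdiag htri
end
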